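/- arXiv:1707.08655 — 10 statements merged into one kernel-verified Lean document; each statement's English description precedes it below -/
import Mathlib

section
/- If T is maximal monotone, z_i, v_i ∈ ℝⁿ, ε_i ≥ 0 with v_i ∈ T^{ε_i}(z_i) for i = 1,…,k, and α_i ≥ 0 with Σα_i = 1, then setting z̄ = Σα_i z_i, v̄ = Σα_i v_i and ε̄ = Σα_i(ε_i + ⟨z_i - z̄, v_i⟩), one has ε̄ ≥ 0 and v̄ ∈ T^{ε̄}(z̄). -/
open RealInnerProductSpace Finset

abbrev Euc (n : ℕ) := EuclideanSpace ℝ (Fin n)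

/-- The ε-enlargement `T^ε` of a point-to-set operator `T`. -/
def enl {n : ℕ} (T : Euc n → Set (Euc n)) (ε : ℝ) (z : Euc n) : Set (Euc n) :=
  {v | ∀ z' v', v' ∈ T z' → ⟪z' - z, v' - v⟫ ≥ -ε}

/-- Monotonicity of a point-to-set operator. -/
def Mono {n : ℕ} (T : Euc n → Set (Euc n)) : Prop :=
  ∀ z v z' v', v ∈ T z → v' ∈ T z' → ⟪z - z', v - v'⟫ ≥ 0

/-- Maximal monotonicity of a point-to-set operator. -/
def MaxMono {n : ℕ} (T : Euc n → Set (Euc n)) : Prop :=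
  Mono T ∧ ∀ S : Euc n → Set (Euc n), Mono S → (∀ z, T z ⊆ S z) → ∀ z, S z = T z

/-- The extended solution set `S_e(A,B)`. -/
def Se {n : ℕ} (A B : Euc n → Set (Euc n)) : Set (Euc n × Euc n) :=
  {p | p.2 ∈ B p.1 ∧ -p.2 ∈ A p.1}

theorem sum_mul_inner_sub_sub_add {ι E : Type*} [Fintype ι] [NormedAddCommGroup E]
    [InnerProductSpace ℝ E] (α ε : ι → ℝ) (z v : ι → E) (hα : ∑ i, α i = 1) (z' v' : E) :
    ∑ i, α i * (⟪z' - z i, v' - v i⟫ + ε i) =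
      ⟪z' - ∑ i, α i • z i, v' - ∑ i, α i • v i⟫ +
        ∑ i, α i * (ε i + ⟪z i - ∑ j, α j • z j, v i⟫) := by
  simp only [inner_sub_left, inner_sub_right, sum_inner, inner_sum, real_inner_smul_left,
    real_inner_smul_right, mul_add, mul_sub, sum_add_distrib, sum_sub_distrib, ← sum_mul, hα]
  simp only [mul_sum]
  ring

section Enlargement

variable {n : ℕ} {T : Euc n → Set (Euc n)}

theorem enl_mono {ε ε' : ℝ} (h : ε ≤ ε') (z : Euc n) : enl T ε z ⊆ enl T ε' z :=
  fun _ hv z' v' hv' => (hv z' v' hv').trans' (neg_le_neg h)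

/-- Adjoining `(z, v)` to the graph of `T` keeps it monotone, so maximality puts it back in. -/
theorem MaxMono.enl_zero_subset (hT : MaxMono T) (z : Euc n) : enl T 0 z ⊆ T z := by
  intro v hv
  have hv₀ : ∀ z' v', v' ∈ T z' → 0 ≤ ⟪z' - z, v' - v⟫ := by simpa [enl] using hv
  let S : Euc n → Set (Euc n) := fun x => T x ∪ {w | x = z ∧ w = v}
  have hS : Mono S := by
    rintro a b c d (hb | ⟨rfl, rfl⟩) (hd | ⟨rfl, rfl⟩)
    · exact hT.1 a b c d hb hd
    · exact hv₀ a b hb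
    · rw [← neg_sub c a, ← neg_sub d b, inner_neg_neg]
      exact hv₀ c d hd
    · simp
  rw [← hT.2 S hS (fun _ => Set.subset_union_left) z]
  exact Or.inr ⟨rfl, rfl⟩

/-- If `ε < 0` then `v ∈ T z` by maximality, and testing the enlargement at `(z, v)` itself
gives `0 ≥ -ε`. -/
theorem MaxMono.nonneg_of_mem_enl (hT : MaxMono T) {ε : ℝ} {z v : Euc n}
    (hv : v ∈ enl T ε z) : 0 ≤ ε := by
  by_contra! hε
  have hvT : v ∈ T z := hT.enl_zero_subset z (enl_mono hε.le z hv)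
  have hself : 0 ≤ ε := by simpa using hv z v hvT
  exact hself.not_gt hε

theorem sum_smul_mem_enl {ι : Type*} [Fintype ι] {z v : ι → Euc n} {ε α : ι → ℝ}
    (hv : ∀ i, v i ∈ enl T (ε i) (z i)) (hα : ∀ i, 0 ≤ α i) (hsum : ∑ i, α i = 1) :
    ∑ i, α i • v i ∈
      enl T (∑ i, α i * (ε i + ⟪z i - ∑ j, α j • z j, v i⟫)) (∑ i, α i • z i) := by
  intro z' v' hv'
  have hterm : 0 ≤ ∑ i, α i * (⟪z' - z i, v' - v i⟫ + ε i) :=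
    sum_nonneg fun i _ => mul_nonneg (hα i) (by linarith [hv i z' v' hv'])
  linarith [sum_mul_inner_sub_sub_add α ε z v hsum z' v']

end Enlargement

theorem weak_transportation_formula_general {n : ℕ} (T : Euc n → Set (Euc n))
    (hT : MaxMono T) (k : ℕ) (z v : Fin k → Euc n) (ε α : Fin k → ℝ)
    (hv : ∀ i, v i ∈ enl T (ε i) (z i))
    (hα : ∀ i, 0 ≤ α i) (hsum : ∑ i, α i = 1) :
    0 ≤ ∑ i, α i * (ε i + ⟪z i - ∑ j, α j • z j, v i⟫) ∧
      (∑ i, α i • v i) ∈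
        enl T (∑ i, α i * (ε i + ⟪z i - ∑ j, α j • z j, v i⟫)) (∑ i, α i • z i) := by
  have hmem := sum_smul_mem_enl hv hα hsum
  exact ⟨hT.nonneg_of_mem_enl hmem, hmem⟩

theorem weak_transportation_formula {n : ℕ} (T : Euc n → Set (Euc n))
    (hT : MaxMono T) (k : ℕ) (z v : Fin k → Euc n) (ε α : Fin k → ℝ)
    (hε : ∀ i, 0 ≤ ε i) (hv : ∀ i, v i ∈ enl T (ε i) (z i))
    (hα : ∀ i, 0 ≤ α i) (hsum : ∑ i, α i = 1) :
    0 ≤ ∑ i, α i * (ε i + ⟪z i - ∑ j, α j • z j, v i⟫) ∧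
      (∑ i, α i • v i) ∈
        enl T (∑ i, α i * (ε i + ⟪z i - ∑ j, α j • z j, v i⟫)) (∑ i, α i • z i) :=
  weak_transportation_formula_general T hT k z v ε α hv hα hsum
end

section
/- Let A, B : ℝⁿ ⇉ ℝⁿ be maximal monotone. Then the extended solution set S_e(A,B) = {(z,w) : w ∈ B(z), -w ∈ A(z)} is a closed convex subset of ℝⁿ × ℝⁿ. -/
open RealInnerProductSpace Finset

/-!
By maximality, `v ∈ T z` holds exactly when `⟪z - z', v - v'⟫ ≥ 0` for every `v' ∈ T z'`, so the
graph of a maximal monotone `T` is an intersection of closed sets. For two points `(z, w)`,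
`(z', w')` of `S_e(A,B)`, monotonicity of `B` gives `⟪z - z', w - w'⟫ ≥ 0` and monotonicity of `A`
gives `≤ 0`, so the two points are "orthogonal". Expanding
`⟪a z₁ + b z₂ - z', a v₁ + b v₂ - v'⟫` for `a + b = 1` shows that the graph of a maximal monotone
operator contains every convex combination of two orthogonal points of it, which gives convexity.
-/

theorem inner_smul_add_smul_sub_smul_add_smul_sub {E : Type*} [NormedAddCommGroup E]
    [InnerProductSpace ℝ E] (x₁ x₂ x y₁ y₂ y : E) {a b : ℝ} (hab : a + b = 1) :
    ⟪a • x₁ + b • x₂ - x, a • y₁ + b • y₂ - y⟫ =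
      a * ⟪x₁ - x, y₁ - y⟫ + b * ⟪x₂ - x, y₂ - y⟫ - a * b * ⟪x₁ - x₂, y₁ - y₂⟫ := by
  simp only [inner_sub_left, inner_sub_right, inner_add_left, inner_add_right,
    real_inner_smul_left, real_inner_smul_right]
  linear_combination (a * ⟪x₁, y₁⟫ + b * ⟪x₂, y₂⟫ - ⟪x, y⟫) * hab

namespace MaxMono

variable {n : ℕ} {T : Euc n → Set (Euc n)}

theorem mem_iff (hT : MaxMono T) {z v : Euc n} :
    v ∈ T z ↔ ∀ z' v', v' ∈ T z' → 0 ≤ ⟪z - z', v - v'⟫ := by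
  refine ⟨fun hv z' v' hv' => hT.1 z v z' v' hv hv', fun h => ?_⟩
  let S : Euc n → Set (Euc n) := fun z' => T z' ∪ {v' | z' = z ∧ v' = v}
  have hS : Mono S := by
    rintro z₁ v₁ z₂ v₂ (h₁ | ⟨rfl, rfl⟩) (h₂ | ⟨rfl, rfl⟩)
    · exact hT.1 z₁ v₁ z₂ v₂ h₁ h₂
    · rw [ge_iff_le, ← neg_sub z₂, ← neg_sub v₂, inner_neg_neg]
      exact h z₁ v₁ h₁
    · exact h z₂ v₂ h₂
    · simp
  rw [← hT.2 S hS (fun _ _ => Or.inl) z]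
  exact Or.inr ⟨rfl, rfl⟩

theorem isClosed_graph (hT : MaxMono T) : IsClosed {p : Euc n × Euc n | p.2 ∈ T p.1} := by
  have hgraph : {p : Euc n × Euc n | p.2 ∈ T p.1} =
      ⋂ z', ⋂ v' ∈ T z', {p : Euc n × Euc n | 0 ≤ ⟪p.1 - z', p.2 - v'⟫} := by
    ext p
    simp only [Set.mem_ofPred_eq, Set.mem_iInter]
    exact hT.mem_iff
  rw [hgraph]
  exact isClosed_iInter fun z' => isClosed_biInter fun v' _ =>
    isClosed_le continuous_const (by fun_prop)

theorem smul_add_smul_mem_of_inner_sub_eq_zero (hT : MaxMono T) {z₁ v₁ z₂ v₂ : Euc n}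
    (h₁ : v₁ ∈ T z₁) (h₂ : v₂ ∈ T z₂) (horth : ⟪z₁ - z₂, v₁ - v₂⟫ = 0) {a b : ℝ}
    (ha : 0 ≤ a) (hb : 0 ≤ b) (hab : a + b = 1) :
    a • v₁ + b • v₂ ∈ T (a • z₁ + b • z₂) := by
  refine hT.mem_iff.2 fun z' v' hv' => ?_
  rw [inner_smul_add_smul_sub_smul_add_smul_sub _ _ _ _ _ _ hab, horth, mul_zero, sub_zero]
  exact add_nonneg (mul_nonneg ha (hT.1 _ _ _ _ h₁ hv')) (mul_nonneg hb (hT.1 _ _ _ _ h₂ hv'))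

end MaxMono

theorem inner_sub_eq_zero_of_mem_Se {n : ℕ} {A B : Euc n → Set (Euc n)} (hA : Mono A)
    (hB : Mono B) {p q : Euc n × Euc n} (hp : p ∈ Se A B) (hq : q ∈ Se A B) :
    ⟪p.1 - q.1, p.2 - q.2⟫ = 0 := by
  have hBpq := hB _ _ _ _ hp.1 hq.1
  have hApq := hA _ _ _ _ hp.2 hq.2
  rw [← neg_sub' p.2, inner_neg_right] at hApq
  linarith

theorem extended_solution_set_closed_convex {n : ℕ} (A B : Euc n → Set (Euc n))
    (hA : MaxMono A) (hB : MaxMono B) :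
    IsClosed (Se A B) ∧ Convex ℝ (Se A B) := by
  refine ⟨?_, fun p hp q hq a b ha hb hab => ?_⟩
  · have hSe : Se A B = {p | p.2 ∈ B p.1} ∩
        (fun p : Euc n × Euc n => (p.1, -p.2)) ⁻¹' {p | p.2 ∈ A p.1} := rfl
    rw [hSe]
    exact hB.isClosed_graph.inter (hA.isClosed_graph.preimage (by fun_prop))
  · have horth := inner_sub_eq_zero_of_mem_Se hA.1 hB.1 hp hq
    have horth' : ⟪p.1 - q.1, -p.2 - -q.2⟫ = 0 := by
      rw [neg_sub_neg, ← neg_sub p.2, inner_neg_right, horth, neg_zero]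
    refine ⟨hB.smul_add_smul_mem_of_inner_sub_eq_zero hp.1 hq.1 horth ha hb hab, ?_⟩
    have hA' := hA.smul_add_smul_mem_of_inner_sub_eq_zero hp.2 hq.2 horth' ha hb hab
    rwa [smul_neg, smul_neg, ← neg_add] at hA'
end

section
/- Consider sequences in ℝⁿ×ℝⁿ generated by (z_k,w_k) = (z_{k-1},w_{k-1}) - ρ_k γ_k ∇φ_k, where each φ_k is an affine function with gradient ∇φ_k, ρ_k ∈ (0,2), and γ_k = 0 if φ_k(z_{k-1},w_{k-1}) ≤ 0 and γ_k = φ_k(z_{k-1},w_{k-1})/‖∇φ_k‖² otherwise. Then for every (z,w) and every k ≥ 1: ½‖(z,w)-(z_k,w_k)‖² + ½ Σ_{j=1}^{k} ρ_j(2-ρ_j) γ_j² ‖∇φ_j‖² = ½‖(z,w)-(z_0,w_0)‖² + Σ_{j=1}^{k} ρ_j γ_j φ_j(z,w). -/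
open RealInnerProductSpace Finset

/-!
Expanding `‖u - (v - t • g)‖²` and using that `φ_j` is affine, a single relaxed projection step
satisfies the identity of the theorem with `k = 1`, provided `γ_j φ_j(z_{j-1}, w_{j-1}) =
γ_j² ‖∇φ_j‖²`; the latter holds for the projection steplength in both branches of its definition
(also when `∇φ_j = 0`, where `a / 0 = 0` makes `γ_j = 0`). Summing the one-step identities
telescopes.
-/

theorem ite_div_mul_self_eq_sq_mul (a N : ℝ) :
    (if a ≤ 0 then 0 else a / N) * a = (if a ≤ 0 then 0 else a / N) ^ 2 * N := by
  split_ifs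
  · ring
  · rcases eq_or_ne N 0 with rfl | hN
    · simp
    · field_simp

section InnerProductSpace

variable {E F : Type*} [NormedAddCommGroup E] [InnerProductSpace ℝ E]
  [NormedAddCommGroup F] [InnerProductSpace ℝ F]

theorem norm_sub_sub_smul_sq (x y g : E) (t : ℝ) :
    ‖x - (y - t • g)‖ ^ 2 = ‖x - y‖ ^ 2 + 2 * t * ⟪x - y, g⟫ + t ^ 2 * ‖g‖ ^ 2 := by
  rw [sub_sub_eq_add_sub, add_sub_right_comm, norm_add_sq_real, real_inner_smul_right,
    norm_smul, mul_pow, Real.norm_eq_abs, sq_abs]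
  ring

theorem relaxed_step_identity (φ : E → F → ℝ) (g₁ : E) (g₂ : F) (x x₀ : E) (y y₀ : F)
    (ρ γ : ℝ) (hφ : φ x y = φ x₀ y₀ + ⟪x - x₀, g₁⟫ + ⟪y - y₀, g₂⟫)
    (hγ : γ * φ x₀ y₀ = γ ^ 2 * (‖g₁‖ ^ 2 + ‖g₂‖ ^ 2)) :
    (1 / 2) * (‖x - (x₀ - (ρ * γ) • g₁)‖ ^ 2 + ‖y - (y₀ - (ρ * γ) • g₂)‖ ^ 2)
        + (1 / 2) * (ρ * (2 - ρ) * γ ^ 2 * (‖g₁‖ ^ 2 + ‖g₂‖ ^ 2))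
      = (1 / 2) * (‖x - x₀‖ ^ 2 + ‖y - y₀‖ ^ 2) + ρ * γ * φ x y := by
  rw [norm_sub_sub_smul_sq, norm_sub_sub_smul_sq]
  linear_combination (-(ρ * γ)) * hφ - ρ * hγ

end InnerProductSpace

theorem add_sum_Icc_eq_of_forall {M : Type*} [AddCommMonoid M] (V c d : ℕ → M)
    (h : ∀ j, 1 ≤ j → V j + c j = V (j - 1) + d j) (k : ℕ) :
    V k + ∑ j ∈ Icc 1 k, c j = V 0 + ∑ j ∈ Icc 1 k, d j := by
  induction k with
  | zero => simp
  | succ k ih =>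
    rw [sum_Icc_succ_top (Nat.le_add_left 1 k), sum_Icc_succ_top (Nat.le_add_left 1 k),
      ← add_assoc, add_right_comm, h (k + 1) (Nat.le_add_left 1 k), Nat.add_sub_cancel,
      add_right_comm, ih, add_assoc]

theorem relaxed_projection_identity_general {n : ℕ}
    (z w : ℕ → Euc n) (φ : ℕ → Euc n → Euc n → ℝ) (g₁ g₂ : ℕ → Euc n)
    (ρ γ : ℕ → ℝ)
    (haff : ∀ j z₁ w₁ z₂ w₂, φ j z₁ w₁ = φ j z₂ w₂ + ⟪z₁ - z₂, g₁ j⟫ + ⟪w₁ - w₂, g₂ j⟫)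
    (hγ : ∀ j, 1 ≤ j → γ j =
      if φ j (z (j - 1)) (w (j - 1)) ≤ 0 then 0
      else φ j (z (j - 1)) (w (j - 1)) / (‖g₁ j‖ ^ 2 + ‖g₂ j‖ ^ 2))
    (hz : ∀ j, 1 ≤ j → z j = z (j - 1) - (ρ j * γ j) • g₁ j)
    (hw : ∀ j, 1 ≤ j → w j = w (j - 1) - (ρ j * γ j) • g₂ j) :
    ∀ (zz ww : Euc n) (k : ℕ), 1 ≤ k →
      (1 / 2) * (‖zz - z k‖ ^ 2 + ‖ww - w k‖ ^ 2)
        + (1 / 2) * ∑ j ∈ Finset.Icc 1 k,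
            ρ j * (2 - ρ j) * γ j ^ 2 * (‖g₁ j‖ ^ 2 + ‖g₂ j‖ ^ 2)
      = (1 / 2) * (‖zz - z 0‖ ^ 2 + ‖ww - w 0‖ ^ 2)
        + ∑ j ∈ Finset.Icc 1 k, ρ j * γ j * φ j zz ww := by
  intro zz ww k _
  rw [mul_sum]
  refine add_sum_Icc_eq_of_forall (fun j ↦ (1 / 2) * (‖zz - z j‖ ^ 2 + ‖ww - w j‖ ^ 2)) _ _
    (fun j hj ↦ ?_) k
  have hγφ : γ j * φ j (z (j - 1)) (w (j - 1)) = γ j ^ 2 * (‖g₁ j‖ ^ 2 + ‖g₂ j‖ ^ 2) := by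
    rw [hγ j hj]
    exact ite_div_mul_self_eq_sq_mul _ _
  rw [hz j hj, hw j hj]
  exact relaxed_step_identity (φ j) (g₁ j) (g₂ j) zz (z (j - 1)) ww (w (j - 1)) (ρ j) (γ j)
    (haff j _ _ _ _) hγφ

theorem relaxed_projection_identity {n : ℕ}
    (z w : ℕ → Euc n) (φ : ℕ → Euc n → Euc n → ℝ) (g₁ g₂ : ℕ → Euc n)
    (ρ γ : ℕ → ℝ)
    (haff : ∀ j z₁ w₁ z₂ w₂, φ j z₁ w₁ = φ j z₂ w₂ + ⟪z₁ - z₂, g₁ j⟫ + ⟪w₁ - w₂, g₂ j⟫)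
    (hρ : ∀ j, 1 ≤ j → 0 < ρ j ∧ ρ j < 2)
    (hγ : ∀ j, 1 ≤ j → γ j =
      if φ j (z (j - 1)) (w (j - 1)) ≤ 0 then 0
      else φ j (z (j - 1)) (w (j - 1)) / (‖g₁ j‖ ^ 2 + ‖g₂ j‖ ^ 2))
    (hz : ∀ j, 1 ≤ j → z j = z (j - 1) - (ρ j * γ j) • g₁ j)
    (hw : ∀ j, 1 ≤ j → w j = w (j - 1) - (ρ j * γ j) • g₂ j) :
    ∀ (zz ww : Euc n) (k : ℕ), 1 ≤ k →
      (1 / 2) * (‖zz - z k‖ ^ 2 + ‖ww - w k‖ ^ 2)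
        + (1 / 2) * ∑ j ∈ Finset.Icc 1 k,
            ρ j * (2 - ρ j) * γ j ^ 2 * (‖g₁ j‖ ^ 2 + ‖g₂ j‖ ^ 2)
      = (1 / 2) * (‖zz - z 0‖ ^ 2 + ‖ww - w 0‖ ^ 2)
        + ∑ j ∈ Finset.Icc 1 k, ρ j * γ j * φ j zz ww :=
  relaxed_projection_identity_general z w φ g₁ g₂ ρ γ haff hγ hz hw
end

section
/- With the ergodic averages of the general projective splitting method and Γ_k = Σ_{j=1}^k ρ_jγ_j, the ergodic error satisfies ε̄^x_k + ε̄^y_k = -(1/Γ_k) Σ_{j=1}^k ρ_jγ_j φ_j(ȳ_k, b̄_k), where φ_j is the decomposable separator associated with (x_j,b_j,ε^x_j) and (y_j,a_j,ε^y_j). -/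
/-!
Each term `ε^x_j + ⟨x_j - x̄, b_j⟩ + ε^y_j + ⟨y_j - ȳ, a_j⟩ + φ_j(ȳ, b̄)` collapses to
`⟨ȳ - x̄, b_j⟩ + ⟨x_j - y_j, b̄⟩`, which is affine in `(x_j, y_j, b_j)`. Its weighted sum is
therefore `Γ (⟨ȳ - x̄, b̄⟩ + ⟨x̄ - ȳ, b̄⟩) = 0`.
-/

open RealInnerProductSpace Finset

section Separator

variable {ι E : Type*} [NormedAddCommGroup E] [InnerProductSpace ℝ E]

def decomposableSeparator (x b : E) (εx : ℝ) (y a : E) (εy : ℝ) (z w : E) : ℝ :=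
  ⟪z - x, b - w⟫ + ⟪z - y, a + w⟫ - εx - εy

theorem errors_add_decomposableSeparator (x b : E) (εx : ℝ) (y a : E) (εy : ℝ)
    (xbar ybar bbar : E) :
    (εx + ⟪x - xbar, b⟫) + (εy + ⟪y - ybar, a⟫)
        + decomposableSeparator x b εx y a εy ybar bbar
      = ⟪ybar - xbar, b⟫ + ⟪x - y, bbar⟫ := by
  simp only [decomposableSeparator, inner_sub_left, inner_sub_right, inner_add_right]
  ring

theorem sum_errors_eq_neg_sum_decomposableSeparator (s : Finset ι) (w : ι → ℝ)
    (x y a b : ι → E) (εx εy : ι → ℝ) (c : ℝ) (xbar ybar bbar : E)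
    (hx : ∑ j ∈ s, w j • x j = c • xbar) (hy : ∑ j ∈ s, w j • y j = c • ybar)
    (hb : ∑ j ∈ s, w j • b j = c • bbar) :
    ∑ j ∈ s, w j * (εx j + ⟪x j - xbar, b j⟫) + ∑ j ∈ s, w j * (εy j + ⟪y j - ybar, a j⟫)
      = -∑ j ∈ s, w j * decomposableSeparator (x j) (b j) (εx j) (y j) (a j) (εy j) ybar bbar := by
  have hsum : ∑ j ∈ s, w j * (εx j + ⟪x j - xbar, b j⟫) + ∑ j ∈ s, w j * (εy j + ⟪y j - ybar, a j⟫)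
        + ∑ j ∈ s, w j * decomposableSeparator (x j) (b j) (εx j) (y j) (a j) (εy j) ybar bbar
      = ⟪ybar - xbar, ∑ j ∈ s, w j • b j⟫
        + ⟪∑ j ∈ s, w j • x j - ∑ j ∈ s, w j • y j, bbar⟫ := by
    simp only [← sum_add_distrib, ← mul_add, errors_add_decomposableSeparator, inner_sum,
      ← sum_sub_distrib, sum_inner, ← smul_sub, real_inner_smul_left, real_inner_smul_right]
  rw [hx, hy, hb, ← smul_sub, real_inner_smul_left, real_inner_smul_right, ← mul_add,
    ← inner_add_left, sub_add_sub_cancel, sub_self, inner_zero_left, mul_zero] at hsum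
  linarith

end Separator

theorem ergodic_error_identity_general {n : ℕ}
    (x y a b : ℕ → Euc n) (ρ γ εx εy : ℕ → ℝ) (k : ℕ)
    (Γ : ℝ)
    (xbar ybar bbar : Euc n)
    (hxbar : xbar = Γ⁻¹ • ∑ j ∈ Finset.Icc 1 k, (ρ j * γ j) • x j)
    (hybar : ybar = Γ⁻¹ • ∑ j ∈ Finset.Icc 1 k, (ρ j * γ j) • y j)
    (hbbar : bbar = Γ⁻¹ • ∑ j ∈ Finset.Icc 1 k, (ρ j * γ j) • b j) :
    Γ⁻¹ * (∑ j ∈ Finset.Icc 1 k, ρ j * γ j * (εx j + ⟪x j - xbar, b j⟫))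
      + Γ⁻¹ * (∑ j ∈ Finset.Icc 1 k, ρ j * γ j * (εy j + ⟪y j - ybar, a j⟫))
    = -(Γ⁻¹ * ∑ j ∈ Finset.Icc 1 k, ρ j * γ j *
        (⟪ybar - x j, b j - bbar⟫ + ⟪ybar - y j, a j + bbar⟫ - εx j - εy j)) := by
  rcases eq_or_ne Γ 0 with rfl | hΓ
  · simp
  rw [← mul_add, sum_errors_eq_neg_sum_decomposableSeparator _ _ x y a b εx εy Γ xbar ybar bbar
    (hxbar ▸ (smul_inv_smul₀ hΓ _).symm) (hybar ▸ (smul_inv_smul₀ hΓ _).symm)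
    (hbbar ▸ (smul_inv_smul₀ hΓ _).symm), mul_neg]
  rfl

theorem ergodic_error_identity {n : ℕ}
    (x y a b : ℕ → Euc n) (ρ γ εx εy : ℕ → ℝ) (k : ℕ) (hk : 1 ≤ k)
    (hεx : ∀ j, 1 ≤ j → 0 ≤ εx j) (hεy : ∀ j, 1 ≤ j → 0 ≤ εy j)
    (hpos : ∀ j, 1 ≤ j → 0 < ρ j * γ j)
    (Γ : ℝ) (hΓ : Γ = ∑ j ∈ Finset.Icc 1 k, ρ j * γ j)
    (xbar ybar bbar : Euc n)
    (hxbar : xbar = Γ⁻¹ • ∑ j ∈ Finset.Icc 1 k, (ρ j * γ j) • x j)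
    (hybar : ybar = Γ⁻¹ • ∑ j ∈ Finset.Icc 1 k, (ρ j * γ j) • y j)
    (hbbar : bbar = Γ⁻¹ • ∑ j ∈ Finset.Icc 1 k, (ρ j * γ j) • b j) :
    Γ⁻¹ * (∑ j ∈ Finset.Icc 1 k, ρ j * γ j * (εx j + ⟪x j - xbar, b j⟫))
      + Γ⁻¹ * (∑ j ∈ Finset.Icc 1 k, ρ j * γ j * (εy j + ⟪y j - ybar, a j⟫))
    = -(Γ⁻¹ * ∑ j ∈ Finset.Icc 1 k, ρ j * γ j *
        (⟪ybar - x j, b j - bbar⟫ + ⟪ybar - y j, a j + bbar⟫ - εx j - εy j)) :=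
  ergodic_error_identity_general x y a b ρ γ εx εy k Γ xbar ybar bbar hxbar hybar hbbar
end

section
/- Under the hypotheses of the general projective splitting iteration with S_e(A,B) nonempty, d₀ = dist((z_0,w_0), S_e(A,B)), and ergodic averages as defined, one has ‖ā_k + b̄_k‖ ≤ 2d₀/Γ_k and ‖x̄_k - ȳ_k‖ ≤ 2d₀/Γ_k for all k ≥ 1. -/
open RealInnerProductSpace Finset

/-! For every `p ∈ S_e(A,B)` the separator `φ_k` is nonpositive at `p`, so the step of length
`ρ_k γ_k` along its gradient `(a_k + b_k, x_k - y_k)` does not increase the distance to `p`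
(Fejér monotonicity). The sums `Σ ρ_j γ_j (a_j + b_j)` and `Σ ρ_j γ_j (x_j - y_j)` telescope to
`z_0 - z_k` and `w_0 - w_k`, each at most twice the distance from `(z_0, w_0)` to `p`. -/

section Separator

variable {E : Type*} [NormedAddCommGroup E] [InnerProductSpace ℝ E]

def separator (x y a b : E) (εx εy : ℝ) (p : E × E) : ℝ :=
  ⟪p.1 - x, b - p.2⟫ + ⟪p.1 - y, a + p.2⟫ - εx - εy

lemma separator_sub_separator (x y a b : E) (εx εy : ℝ) (q p : E × E) :
    separator x y a b εx εy q - separator x y a b εx εy p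
      = ⟪q.1 - p.1, a + b⟫ + ⟪q.2 - p.2, x - y⟫ := by
  simp only [separator, inner_sub_left, inner_sub_right, inner_add_right,
    real_inner_comm q.2, real_inner_comm p.2]
  ring

lemma norm_sq_sub_smul_add_norm_sq_sub_smul_le {u₁ u₂ d₁ d₂ : E} {ρ γ : ℝ}
    (hρ : 0 ≤ ρ) (hρ2 : ρ ≤ 2) (hγ : 0 ≤ γ)
    (h : γ * (‖d₁‖ ^ 2 + ‖d₂‖ ^ 2) ≤ ⟪u₁, d₁⟫ + ⟪u₂, d₂⟫) :
    ‖u₁ - (ρ * γ) • d₁‖ ^ 2 + ‖u₂ - (ρ * γ) • d₂‖ ^ 2 ≤ ‖u₁‖ ^ 2 + ‖u₂‖ ^ 2 := by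
  simp only [norm_sub_sq_real, real_inner_smul_right, norm_smul, Real.norm_eq_abs, mul_pow,
    sq_abs]
  -- the left side is at most `‖u₁‖² + ‖u₂‖² - ρ (2 - ρ) γ² (‖d₁‖² + ‖d₂‖²)`
  have hdecrease : 0 ≤ ρ * (2 - ρ) * γ ^ 2 * (‖d₁‖ ^ 2 + ‖d₂‖ ^ 2) := by
    have : 0 ≤ 2 - ρ := by linarith
    positivity
  nlinarith [mul_le_mul_of_nonneg_left h (mul_nonneg hρ hγ)]

end Separator

lemma separator_nonpos_of_mem_Se {n : ℕ} {A B : Euc n → Set (Euc n)} {x y a b : Euc n}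
    {εx εy : ℝ} (hb : b ∈ enl B εx x) (ha : a ∈ enl A εy y) {p : Euc n × Euc n}
    (hp : p ∈ Se A B) : separator x y a b εx εy p ≤ 0 := by
  have hB := hb p.1 p.2 hp.1
  have hA := ha p.1 (-p.2) hp.2
  have eB : p.2 - b = -(b - p.2) := by abel
  have eA : -p.2 - a = -(a + p.2) := by abel
  rw [eB, inner_neg_right] at hB
  rw [eA, inner_neg_right] at hA
  simp only [separator]
  linarith

lemma sum_Icc_eq_sub_of_eq_sub {G : Type*} [AddCommGroup G] {z c : ℕ → G}
    (hz : ∀ j, 1 ≤ j → z j = z (j - 1) - c j) (k : ℕ) :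
    ∑ j ∈ Icc 1 k, c j = z 0 - z k := by
  induction k with
  | zero => simp
  | succ k ih =>
    rw [sum_Icc_succ_top (by omega), ih, hz (k + 1) (by omega), Nat.add_sub_cancel]
    abel

lemma norm_sub_le_two_mul_sqrt_of_norm_sq_add_le {E : Type*} [NormedAddCommGroup E]
    {z₀ z c w₀ w d : E} (h : ‖z - c‖ ^ 2 + ‖w - d‖ ^ 2 ≤ ‖z₀ - c‖ ^ 2 + ‖w₀ - d‖ ^ 2) :
    ‖z₀ - z‖ ≤ 2 * √(‖z₀ - c‖ ^ 2 + ‖w₀ - d‖ ^ 2) := by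
  have hz₀ : ‖z₀ - c‖ ≤ √(‖z₀ - c‖ ^ 2 + ‖w₀ - d‖ ^ 2) :=
    Real.le_sqrt_of_sq_le (by nlinarith [sq_nonneg ‖w₀ - d‖])
  have hz : ‖z - c‖ ≤ √(‖z₀ - c‖ ^ 2 + ‖w₀ - d‖ ^ 2) :=
    Real.le_sqrt_of_sq_le (by nlinarith [sq_nonneg ‖w - d‖])
  linarith [norm_sub_le_norm_sub_add_norm_sub z₀ c z, norm_sub_rev c z]

section Iteration

variable {n : ℕ} {A B : Euc n → Set (Euc n)} {x y a b z w : ℕ → Euc n} {ρ γ εx εy : ℕ → ℝ}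

lemma fejer_monotone_of_mem_Se
    (hb : ∀ j, 1 ≤ j → b j ∈ enl B (εx j) (x j))
    (ha : ∀ j, 1 ≤ j → a j ∈ enl A (εy j) (y j))
    (hρ : ∀ j, 1 ≤ j → 0 < ρ j ∧ ρ j < 2)
    (hγpos : ∀ j, 1 ≤ j → 0 < γ j)
    (hγ : ∀ j, 1 ≤ j → γ j * (‖a j + b j‖ ^ 2 + ‖x j - y j‖ ^ 2)
      = separator (x j) (y j) (a j) (b j) (εx j) (εy j) (z (j - 1), w (j - 1)))
    (hz : ∀ j, 1 ≤ j → z j = z (j - 1) - (ρ j * γ j) • (a j + b j))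
    (hw : ∀ j, 1 ≤ j → w j = w (j - 1) - (ρ j * γ j) • (x j - y j))
    {p : Euc n × Euc n} (hp : p ∈ Se A B) (k : ℕ) :
    ‖z k - p.1‖ ^ 2 + ‖w k - p.2‖ ^ 2 ≤ ‖z 0 - p.1‖ ^ 2 + ‖w 0 - p.2‖ ^ 2 := by
  induction k with
  | zero => exact le_rfl
  | succ j ih =>
    have hj : 1 ≤ j + 1 := j.succ_pos
    have hsep := separator_nonpos_of_mem_Se (hb _ hj) (ha _ hj) hp
    have hdiff := separator_sub_separator (x (j + 1)) (y (j + 1)) (a (j + 1)) (b (j + 1))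
      (εx (j + 1)) (εy (j + 1)) (z j, w j) p
    have hγj := hγ _ hj
    have hzj := hz _ hj
    have hwj := hw _ hj
    simp only [Nat.add_sub_cancel] at hγj hzj hwj
    have hz' : z (j + 1) - p.1
        = (z j - p.1) - (ρ (j + 1) * γ (j + 1)) • (a (j + 1) + b (j + 1)) := by
      rw [hzj]; abel
    have hw' : w (j + 1) - p.2
        = (w j - p.2) - (ρ (j + 1) * γ (j + 1)) • (x (j + 1) - y (j + 1)) := by
      rw [hwj]; abel
    rw [hz', hw']
    refine (norm_sq_sub_smul_add_norm_sq_sub_smul_le (hρ _ hj).1.le (hρ _ hj).2.le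
      (hγpos _ hj).le ?_).trans ih
    linarith

end Iteration

theorem ergodic_residual_bounds_general {n : ℕ} (A B : Euc n → Set (Euc n))
    (hSe : (Se A B).Nonempty)
    (x y a b z w : ℕ → Euc n) (ρ γ εx εy : ℕ → ℝ) (d₀ : ℝ)
    (hb : ∀ j, 1 ≤ j → b j ∈ enl B (εx j) (x j))
    (ha : ∀ j, 1 ≤ j → a j ∈ enl A (εy j) (y j))
    (hρ : ∀ j, 1 ≤ j → 0 < ρ j ∧ ρ j < 2)
    (hγpos : ∀ j, 1 ≤ j → 0 < γ j)
    (hγ : ∀ j, 1 ≤ j → γ j * (‖a j + b j‖ ^ 2 + ‖x j - y j‖ ^ 2)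
      = ⟪z (j - 1) - x j, b j - w (j - 1)⟫ + ⟪z (j - 1) - y j, a j + w (j - 1)⟫
        - εx j - εy j)
    (hz : ∀ j, 1 ≤ j → z j = z (j - 1) - (ρ j * γ j) • (a j + b j))
    (hw : ∀ j, 1 ≤ j → w j = w (j - 1) - (ρ j * γ j) • (x j - y j))
    (hd₀ : d₀ = sInf {r : ℝ | ∃ p ∈ Se A B,
      r = Real.sqrt (‖z 0 - p.1‖ ^ 2 + ‖w 0 - p.2‖ ^ 2)})
    (k : ℕ) (hk : 1 ≤ k)
    (Γ : ℝ) (hΓ : Γ = ∑ j ∈ Finset.Icc 1 k, ρ j * γ j) :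
    ‖Γ⁻¹ • ((∑ j ∈ Finset.Icc 1 k, (ρ j * γ j) • a j)
        + ∑ j ∈ Finset.Icc 1 k, (ρ j * γ j) • b j)‖ ≤ 2 * d₀ / Γ ∧
    ‖Γ⁻¹ • ((∑ j ∈ Finset.Icc 1 k, (ρ j * γ j) • x j)
        - ∑ j ∈ Finset.Icc 1 k, (ρ j * γ j) • y j)‖ ≤ 2 * d₀ / Γ := by
  have fejer {p : Euc n × Euc n} (hp : p ∈ Se A B) :=
    fejer_monotone_of_mem_Se hb ha hρ hγpos hγ hz hw hp
  have hΓpos : 0 < Γ := hΓ ▸ sum_pos (fun j hj ↦ mul_pos (hρ j (mem_Icc.1 hj).1).1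
    (hγpos j (mem_Icc.1 hj).1)) ⟨1, mem_Icc.2 ⟨le_rfl, hk⟩⟩
  have hsumZ : ∑ j ∈ Icc 1 k, (ρ j * γ j) • a j + ∑ j ∈ Icc 1 k, (ρ j * γ j) • b j
      = z 0 - z k := by
    rw [← sum_Icc_eq_sub_of_eq_sub hz, ← sum_add_distrib]
    simp only [smul_add]
  have hsumW : ∑ j ∈ Icc 1 k, (ρ j * γ j) • x j - ∑ j ∈ Icc 1 k, (ρ j * γ j) • y j
      = w 0 - w k := by
    rw [← sum_Icc_eq_sub_of_eq_sub hw, ← sum_sub_distrib]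
    simp only [smul_sub]
  obtain ⟨p₀, hp₀⟩ := hSe
  have le_two_d₀ {v : Euc n}
      (hv : ∀ p ∈ Se A B, ‖v‖ ≤ 2 * √(‖z 0 - p.1‖ ^ 2 + ‖w 0 - p.2‖ ^ 2)) : ‖v‖ ≤ 2 * d₀ := by
    have : ‖v‖ / 2 ≤ d₀ := hd₀ ▸ le_csInf ⟨_, p₀, hp₀, rfl⟩ (by
      rintro _ ⟨p, hp, rfl⟩
      linarith [hv p hp])
    linarith
  have hZ : ‖z 0 - z k‖ ≤ 2 * d₀ := le_two_d₀ fun p hp ↦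
    norm_sub_le_two_mul_sqrt_of_norm_sq_add_le (fejer hp k)
  have hW : ‖w 0 - w k‖ ≤ 2 * d₀ := le_two_d₀ fun p hp ↦ by
    rw [add_comm (‖z 0 - p.1‖ ^ 2)]
    exact norm_sub_le_two_mul_sqrt_of_norm_sq_add_le (w := z k) (by linarith [fejer hp k])
  rw [hsumZ, hsumW, norm_smul, norm_smul, norm_inv, Real.norm_of_nonneg hΓpos.le,
    ← div_eq_inv_mul, ← div_eq_inv_mul]
  exact ⟨div_le_div_of_nonneg_right hZ hΓpos.le, div_le_div_of_nonneg_right hW hΓpos.le⟩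

theorem ergodic_residual_bounds {n : ℕ} (A B : Euc n → Set (Euc n))
    (hA : MaxMono A) (hB : MaxMono B) (hSe : (Se A B).Nonempty)
    (x y a b z w : ℕ → Euc n) (ρ γ εx εy : ℕ → ℝ) (d₀ : ℝ)
    (hεx : ∀ j, 1 ≤ j → 0 ≤ εx j) (hεy : ∀ j, 1 ≤ j → 0 ≤ εy j)
    (hb : ∀ j, 1 ≤ j → b j ∈ enl B (εx j) (x j))
    (ha : ∀ j, 1 ≤ j → a j ∈ enl A (εy j) (y j))
    (hρ : ∀ j, 1 ≤ j → 0 < ρ j ∧ ρ j < 2)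
    (hγpos : ∀ j, 1 ≤ j → 0 < γ j)
    (hγ : ∀ j, 1 ≤ j → γ j * (‖a j + b j‖ ^ 2 + ‖x j - y j‖ ^ 2)
      = ⟪z (j - 1) - x j, b j - w (j - 1)⟫ + ⟪z (j - 1) - y j, a j + w (j - 1)⟫
        - εx j - εy j)
    (hz : ∀ j, 1 ≤ j → z j = z (j - 1) - (ρ j * γ j) • (a j + b j))
    (hw : ∀ j, 1 ≤ j → w j = w (j - 1) - (ρ j * γ j) • (x j - y j))
    (hd₀ : d₀ = sInf {r : ℝ | ∃ p ∈ Se A B,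
      r = Real.sqrt (‖z 0 - p.1‖ ^ 2 + ‖w 0 - p.2‖ ^ 2)})
    (k : ℕ) (hk : 1 ≤ k)
    (Γ : ℝ) (hΓ : Γ = ∑ j ∈ Finset.Icc 1 k, ρ j * γ j) :
    ‖Γ⁻¹ • ((∑ j ∈ Finset.Icc 1 k, (ρ j * γ j) • a j)
        + ∑ j ∈ Finset.Icc 1 k, (ρ j * γ j) • b j)‖ ≤ 2 * d₀ / Γ ∧
    ‖Γ⁻¹ • ((∑ j ∈ Finset.Icc 1 k, (ρ j * γ j) • x j)
        - ∑ j ∈ Finset.Icc 1 k, (ρ j * γ j) • y j)‖ ≤ 2 * d₀ / Γ :=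
  ergodic_residual_bounds_general A B hSe x y a b z w ρ γ εx εy d₀ hb ha hρ hγpos hγ hz hw hd₀ k hk
    Γ hΓ
end

section
/- In the exact PSM iteration, where λ_k b_k + x_k = z_{k-1} + λ_k w_{k-1} with b_k ∈ B(x_k), and μ_k a_k + y_k = (1-α_k) z_{k-1} + α_k x_k - μ_k w_{k-1} with a_k ∈ A(y_k), the separator value satisfies φ_k(z_{k-1},w_{k-1}) = (1/μ_k)‖z_{k-1}-y_k‖² + (α_kλ_k/μ_k)⟨z_{k-1}-y_k, w_{k-1}-b_k⟩ + λ_k‖w_{k-1}-b_k‖², and hence φ_k(z_{k-1},w_{k-1}) ≥ (θ_k/μ_k)(‖z_{k-1}-y_k‖² + ‖w_{k-1}-b_k‖²), where θ_k > 0 is the smallest eigenvalue of the 2×2 matrix [[1, -λ_k|α_k|/2], [-λ_k|α_k|/2, λ_kμ_k]]. -/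
/-! The proximal equations give `z - x = λ (b - w)` and `μ (a + w) = (z - y) + αλ (w - b)`,
so `μ φ = ‖z - y‖² + αλ ⟪z - y, w - b⟫ + λμ ‖w - b‖²`. By Cauchy–Schwarz this is at least the
quadratic form of `[[1, -λ|α|/2], [-λ|α|/2, λμ]]` at `(‖z - y‖, ‖w - b‖)`, hence at least its
smallest eigenvalue `θ` times `‖z - y‖² + ‖w - b‖²`; and `θ > 0` because the determinant
`λμ - (λα/2)²` is positive. -/
open RealInnerProductSpace Finset

/-- The smaller root of `X² - t X + δ`, i.e. the smallest eigenvalue of a symmetric `2 × 2` real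
matrix with trace `t` and determinant `δ`. -/
noncomputable def smallerEigenvalue (t δ : ℝ) : ℝ := (t - Real.sqrt (t ^ 2 - 4 * δ)) / 2

section SmallerEigenvalue

variable (a c d : ℝ)

lemma discrim_eq_sub_sq_add : (a + d) ^ 2 - 4 * (a * d - c ^ 2) = (a - d) ^ 2 + 4 * c ^ 2 := by
  ring

lemma abs_sub_le_sqrt_discrim : |a - d| ≤ Real.sqrt ((a + d) ^ 2 - 4 * (a * d - c ^ 2)) := by
  rw [← Real.sqrt_sq_eq_abs, discrim_eq_sub_sq_add]
  exact Real.sqrt_le_sqrt (by nlinarith [sq_nonneg c])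

lemma smallerEigenvalue_le_left : smallerEigenvalue (a + d) (a * d - c ^ 2) ≤ a := by
  have := (abs_le.mp (abs_sub_le_sqrt_discrim a c d)).1
  unfold smallerEigenvalue
  linarith

lemma smallerEigenvalue_le_right : smallerEigenvalue (a + d) (a * d - c ^ 2) ≤ d := by
  have := (abs_le.mp (abs_sub_le_sqrt_discrim a c d)).2
  unfold smallerEigenvalue
  linarith

lemma sub_smallerEigenvalue_mul_sub :
    (a - smallerEigenvalue (a + d) (a * d - c ^ 2)) *
      (d - smallerEigenvalue (a + d) (a * d - c ^ 2)) = c ^ 2 := by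
  have hsq := Real.sq_sqrt (show 0 ≤ (a + d) ^ 2 - 4 * (a * d - c ^ 2) by
    rw [discrim_eq_sub_sq_add]; positivity)
  unfold smallerEigenvalue
  linear_combination (1 / 4) * hsq

lemma smallerEigenvalue_pos (ha : 0 < a) (hdet : 0 < a * d - c ^ 2) :
    0 < smallerEigenvalue (a + d) (a * d - c ^ 2) := by
  have hd : 0 < d := by nlinarith [sq_nonneg c]
  have hlt : Real.sqrt ((a + d) ^ 2 - 4 * (a * d - c ^ 2)) < a + d := by
    rw [Real.sqrt_lt' (by linarith)]
    linarith
  unfold smallerEigenvalue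
  linarith

/-- `[[a, -c], [-c, d]]` has trace `a + d` and determinant `a * d - c ^ 2`. -/
lemma smallerEigenvalue_mul_le (u v : ℝ) :
    smallerEigenvalue (a + d) (a * d - c ^ 2) * (u ^ 2 + v ^ 2)
      ≤ a * u ^ 2 - 2 * c * u * v + d * v ^ 2 := by
  set θ := smallerEigenvalue (a + d) (a * d - c ^ 2)
  have hP : 0 ≤ a - θ := sub_nonneg.mpr (smallerEigenvalue_le_left a c d)
  have hQ : 0 ≤ d - θ := sub_nonneg.mpr (smallerEigenvalue_le_right a c d)
  have hPQ : (a - θ) * (d - θ) = c ^ 2 := sub_smallerEigenvalue_mul_sub a c d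
  -- `[[a - θ, -c], [-c, d - θ]]` is positive semidefinite with zero determinant.
  have hpsd : 0 ≤ (a - θ) * u ^ 2 - 2 * c * u * v + (d - θ) * v ^ 2 := by
    rcases hP.eq_or_lt with hP0 | hPpos
    · have hc : c = 0 := by nlinarith [sq_nonneg c]
      rw [← hP0, hc]
      nlinarith [mul_nonneg hQ (sq_nonneg v)]
    · nlinarith [sq_nonneg ((a - θ) * u - c * v)]
  linarith

variable {E : Type*} [NormedAddCommGroup E] [InnerProductSpace ℝ E]

lemma smallerEigenvalue_mul_le_inner {β : ℝ} (hβ : |β| ≤ 2 * c) (s t : E) :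
    smallerEigenvalue (a + d) (a * d - c ^ 2) * (‖s‖ ^ 2 + ‖t‖ ^ 2)
      ≤ a * ‖s‖ ^ 2 + β * ⟪s, t⟫ + d * ‖t‖ ^ 2 := by
  have hcross : -(2 * c * ‖s‖ * ‖t‖) ≤ β * ⟪s, t⟫ := by
    have h := abs_real_inner_le_norm s t
    have h' : |β * ⟪s, t⟫| ≤ 2 * c * (‖s‖ * ‖t‖) := by
      rw [abs_mul]
      exact mul_le_mul hβ h (abs_nonneg _) (by linarith [abs_nonneg β])
    linarith [neg_abs_le (β * ⟪s, t⟫)]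
  linarith [smallerEigenvalue_mul_le a c d ‖s‖ ‖t‖]

end SmallerEigenvalue

section Separator

variable {E : Type*} [NormedAddCommGroup E] [InnerProductSpace ℝ E]

lemma mul_separator_eq {lam mu alpha : ℝ} {z w x b y a : E}
    (hxb : lam • b + x = z + lam • w)
    (hya : mu • a + y = (1 - alpha) • z + alpha • x - mu • w) :
    mu * (⟪z - x, b - w⟫ + ⟪z - y, a + w⟫)
      = ‖z - y‖ ^ 2 + (alpha * lam) * ⟪z - y, w - b⟫ + (lam * mu) * ‖w - b‖ ^ 2 := by
  have hzx : z - x = lam • (b - w) := by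
    linear_combination (norm := module) -hxb
  have hzy : mu • (a + w) = (z - y) + (alpha * lam) • (w - b) := by
    linear_combination (norm := module) hya - alpha • hzx
  have hx : ⟪z - x, b - w⟫ = lam * ‖w - b‖ ^ 2 := by
    rw [hzx, real_inner_smul_left, real_inner_self_eq_norm_sq, norm_sub_rev]
  have hy : mu * ⟪z - y, a + w⟫ = ‖z - y‖ ^ 2 + alpha * lam * ⟪z - y, w - b⟫ := by
    rw [← real_inner_smul_right, hzy, inner_add_right, real_inner_smul_right,
      real_inner_self_eq_norm_sq]
  rw [mul_add, hx, hy]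
  ring

end Separator

theorem psm_separator_lower_bound_general {n : ℕ}
    (lam mu alpha θ : ℝ) (hlam : 0 < lam) (hmu : 0 < mu)
    (hcond : mu / lam - (alpha / 2) ^ 2 > 0)
    (z w x b y a : Euc n)
    (hxb : lam • b + x = z + lam • w)
    (hya : mu • a + y = (1 - alpha) • z + alpha • x - mu • w)
    (hθ : θ = (1 + lam * mu -
      Real.sqrt ((1 + lam * mu) ^ 2 - 4 * (lam * mu - (lam * |alpha| / 2) ^ 2))) / 2) :
    0 < θ ∧
    ⟪z - x, b - w⟫ + ⟪z - y, a + w⟫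
      = (1 / mu) * ‖z - y‖ ^ 2 + (alpha * lam / mu) * ⟪z - y, w - b⟫
        + lam * ‖w - b‖ ^ 2 ∧
    ⟪z - x, b - w⟫ + ⟪z - y, a + w⟫ ≥ (θ / mu) * (‖z - y‖ ^ 2 + ‖w - b‖ ^ 2) := by
  set c := lam * |alpha| / 2 with hc
  have hθ' : θ = smallerEigenvalue (1 + lam * mu) (1 * (lam * mu) - c ^ 2) := by
    rw [hθ, one_mul]; rfl
  have hdet : 0 < 1 * (lam * mu) - c ^ 2 := by
    have hc_sq : c ^ 2 = lam ^ 2 * (alpha / 2) ^ 2 := by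
      rw [hc, mul_div_assoc, mul_pow, div_pow, sq_abs, div_pow]
    have hcond' : lam * (alpha / 2) ^ 2 < mu := by
      rwa [gt_iff_lt, sub_pos, lt_div_iff₀ hlam, mul_comm] at hcond
    nlinarith
  have hβ : |alpha * lam| ≤ 2 * c := by
    rw [abs_mul, abs_of_pos hlam, hc]; linarith
  have hsep := mul_separator_eq (mu := mu) (alpha := alpha) hxb hya
  refine ⟨hθ' ▸ smallerEigenvalue_pos 1 c (lam * mu) one_pos hdet, ?_, ?_⟩
  · field_simp
    linarith
  · rw [ge_iff_le, div_mul_eq_mul_div, div_le_iff₀ hmu, mul_comm _ mu, hsep, hθ']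
    simpa only [one_mul] using
      smallerEigenvalue_mul_le_inner 1 c (lam * mu) hβ (z - y) (w - b)

theorem psm_separator_lower_bound {n : ℕ} (A B : Euc n → Set (Euc n))
    (lam mu alpha θ : ℝ) (hlam : 0 < lam) (hmu : 0 < mu)
    (hcond : mu / lam - (alpha / 2) ^ 2 > 0)
    (z w x b y a : Euc n)
    (hbB : b ∈ B x) (haA : a ∈ A y)
    (hxb : lam • b + x = z + lam • w)
    (hya : mu • a + y = (1 - alpha) • z + alpha • x - mu • w)
    (hθ : θ = (1 + lam * mu -
      Real.sqrt ((1 + lam * mu) ^ 2 - 4 * (lam * mu - (lam * |alpha| / 2) ^ 2))) / 2) :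
    0 < θ ∧
    ⟪z - x, b - w⟫ + ⟪z - y, a + w⟫
      = (1 / mu) * ‖z - y‖ ^ 2 + (alpha * lam / mu) * ⟪z - y, w - b⟫
        + lam * ‖w - b‖ ^ 2 ∧
    ⟪z - x, b - w⟫ + ⟪z - y, a + w⟫ ≥ (θ / mu) * (‖z - y‖ ^ 2 + ‖w - b‖ ^ 2) :=
  psm_separator_lower_bound_general lam mu alpha θ hlam hmu hcond z w x b y a hxb hya hθ
end

section
/- Under assumptions (A.1) λ_k, μ_k ∈ [λ̲, λ̄] with λ̄ ≥ λ̲ > 0, (A.2) ρ_k ∈ [1-ρ̄, 1+ρ̄] with ρ̄ ∈ [0,1), and (A.3) inf_k(μ_k/λ_k - (α_k/2)²) = ν > 0, the PSM generates b_k ∈ B(x_k), a_k ∈ A(y_k) and for each k ≥ 1 there exists 1 ≤ i ≤ k with ‖a_i + b_i‖ ≤ d₀υ/(√k (1-ρ̄)) and ‖x_i - y_i‖ ≤ d₀υ/(√k (1-ρ̄)), where υ = 2λ̄(1+λ̄²)(1+√(λ̄/λ̲))/(λ̲²ν) and d₀ = dist((z_0,w_0), S_e(A,B)). -/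
open RealInnerProductSpace Finset

/-!
Each PSM step is a relaxed projection onto the half-space `{φ_k ≤ 0}`, where `φ_k` is an affine
function of `(z, w)` with gradient `(a_k + b_k, x_k - y_k)` that is nonpositive on `S_e(A,B)` by
monotonicity. Hence `dist((z_k, w_k), p)²` drops by at least
`(1 - ρ̄)² φ_k(z_{k-1}, w_{k-1})² / ‖∇φ_k‖²` at every step. In the variables `u = a_k + w_{k-1}`,
`v = b_k - w_{k-1}` both `φ_k(z_{k-1}, w_{k-1})` and `‖∇φ_k‖²` are quadratic forms, and (A.1),
(A.3) make `υ φ_k - ‖∇φ_k‖²` positive semidefinite; so each decrease is at least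
`(1 - ρ̄)² ‖∇φ_k‖² / υ²`, and summing over `k` steps bounds the smallest gradient.
-/

-- `υ = psmConst λ̲ λ̄ / (λ̲² ν)`
noncomputable def psmConst (lo hi : ℝ) : ℝ := 2 * hi * (1 + hi ^ 2) * (1 + √(hi / lo))

section Constants

variable {lo hi ν L M α : ℝ}

theorem psmConst_pos (hlo : 0 < lo) (hhi : 0 < hi) : 0 < psmConst lo hi := by
  unfold psmConst; positivity

theorem mul_le_psmConst (hlo : 0 < lo) (hL : L ∈ Set.Icc lo hi) (hM : M ∈ Set.Icc lo hi)
    (hα : α ^ 2 * L ≤ 4 * M) : (1 + L * M) * (M + (1 - α) * L) ≤ psmConst lo hi := by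
  obtain ⟨hL1, hL2⟩ := hL
  obtain ⟨hM1, hM2⟩ := hM
  have hL0 : 0 < L := hlo.trans_le hL1
  have hM0 : 0 < M := hlo.trans_le hM1
  have hhi : 0 < hi := hL0.trans_le hL2
  rcases le_total (M + (1 - α) * L) 0 with hneg | hpos
  · exact (mul_nonpos_of_nonneg_of_nonpos (by positivity) hneg).trans (psmConst_pos hlo hhi).le
  set r := √(hi / lo)
  have hr0 : 0 ≤ r := Real.sqrt_nonneg _
  have hr : r ^ 2 * lo = hi := by rw [Real.sq_sqrt (by positivity)]; field_simp
  have hαr : -α ≤ 2 * r := by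
    have h : α ^ 2 * L ≤ (2 * r) ^ 2 * L := by nlinarith
    linarith [(abs_le_of_sq_le_sq' ((mul_le_mul_iff_left₀ hL0).1 h) (by positivity)).1]
  calc (1 + L * M) * (M + (1 - α) * L) ≤ (1 + hi ^ 2) * (2 * hi * (1 + r)) := by
        gcongr
        · nlinarith
        · nlinarith
    _ = psmConst lo hi := by unfold psmConst; ring

theorem one_add_sq_mul_lt_psmConst_mul (hlo : 0 < lo) (hL : L ∈ Set.Icc lo hi)
    (hM : M ∈ Set.Icc lo hi) (hν : 0 ≤ ν) (hνL : ν * L ≤ M) :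
    (1 + M ^ 2) * (lo ^ 2 * ν) < psmConst lo hi * M := by
  obtain ⟨hL1, hL2⟩ := hL
  obtain ⟨hM1, hM2⟩ := hM
  have hL0 : 0 < L := hlo.trans_le hL1
  have hM0 : 0 < M := hlo.trans_le hM1
  have hhi : 0 < hi := hM0.trans_le hM2
  have hνlo : lo ^ 2 * ν ≤ M * hi := by
    calc lo ^ 2 * ν ≤ lo * (ν * L) := by
          nlinarith [mul_le_mul_of_nonneg_left hL1 (by positivity : 0 ≤ lo * ν)]
      _ ≤ hi * M := by gcongr; linarith
      _ = M * hi := mul_comm _ _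
  calc (1 + M ^ 2) * (lo ^ 2 * ν) ≤ (1 + hi ^ 2) * (M * hi) := by gcongr
    _ < psmConst lo hi * M := by
      have hMhi : 0 < M * hi * (1 + hi ^ 2) := by positivity
      unfold psmConst
      nlinarith [mul_nonneg hMhi.le (Real.sqrt_nonneg (hi / lo))]

-- The coefficients of `K φ_k - ‖∇φ_k‖²` in `‖u‖²`, `‖v‖²`, `⟪u, v⟫`, with `(L, M) = (λ_k, μ_k)`.
theorem psm_form_pos_and_discrim_le {K : ℝ} (hlo : 0 < lo) (hL : L ∈ Set.Icc lo hi)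
    (hM : M ∈ Set.Icc lo hi) (hν : 0 < ν) (hα : ν ≤ M / L - (α / 2) ^ 2)
    (hK : K = psmConst lo hi / (lo ^ 2 * ν)) :
    0 < K * M - 1 - M ^ 2 ∧
      (K * α * L - 2 - 2 * M * L * (α - 1)) ^ 2
        ≤ 4 * (K * L - 1 - L ^ 2 * (α - 1) ^ 2) * (K * M - 1 - M ^ 2) := by
  have hL0 : 0 < L := hlo.trans_le hL.1
  have hK0 : 0 < K := hK ▸ div_pos (psmConst_pos hlo (hL0.trans_le hL.2)) (by positivity)
  have hKν : K * (lo ^ 2 * ν) = psmConst lo hi := by rw [hK]; field_simp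
  have hcon : 4 * ν * L + α ^ 2 * L ≤ 4 * M := by
    rw [le_sub_iff_add_le, le_div_iff₀ hL0] at hα
    linarith
  -- `υ` is large enough that `υ ν L²` dominates the cross term `(1 + LM)(M + (1 - α)L)`.
  have hcross : (1 + L * M) * (M + (1 - α) * L) ≤ K * ν * L ^ 2 := by
    calc _ ≤ psmConst lo hi := mul_le_psmConst hlo hL hM (by linarith [mul_pos hν hL0])
      _ = K * ν * lo ^ 2 := by rw [← hKν]; ring
      _ ≤ K * ν * L ^ 2 := by gcongr; exact hL.1
  have hQ : 0 < K * M - 1 - M ^ 2 := by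
    have h := one_add_sq_mul_lt_psmConst_mul hlo hL hM hν.le (by nlinarith)
    rw [← hKν, mul_right_comm] at h
    linarith [lt_of_mul_lt_mul_right h (by positivity)]
  refine ⟨hQ, ?_⟩
  have hid : 4 * (K * L - 1 - L ^ 2 * (α - 1) ^ 2) * (K * M - 1 - M ^ 2)
      - (K * α * L - 2 - 2 * M * L * (α - 1)) ^ 2
      = K ^ 2 * L * (4 * M - α ^ 2 * L) - 4 * K * ((1 + L * M) * (M + (1 - α) * L))
        + 4 * (M + (1 - α) * L) ^ 2 := by ring
  nlinarith [mul_le_mul_of_nonneg_left (show 4 * ν * L ≤ 4 * M - α ^ 2 * L by linarith)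
    (by positivity : 0 ≤ K ^ 2 * L), mul_le_mul_of_nonneg_left hcross hK0.le,
    sq_nonneg (M + (1 - α) * L)]

end Constants

section InnerProductSpace

variable {E : Type*} [NormedAddCommGroup E] [InnerProductSpace ℝ E]

theorem inner_quadratic_nonneg (u v : E) {P Q R : ℝ} (hQ : 0 < Q) (hR : R ^ 2 ≤ 4 * P * Q) :
    0 ≤ P * ‖v‖ ^ 2 + Q * ‖u‖ ^ 2 + R * ⟪u, v⟫ := by
  have hRuv : -(|R| * (‖u‖ * ‖v‖)) ≤ R * ⟪u, v⟫ := by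
    rw [neg_le]
    calc -(R * ⟪u, v⟫) ≤ |R * ⟪u, v⟫| := neg_le_abs _
      _ = |R| * |⟪u, v⟫| := abs_mul _ _
      _ ≤ |R| * (‖u‖ * ‖v‖) := by gcongr; exact abs_real_inner_le_norm u v
  -- `4Q` times the form is at least `(2Q‖u‖ - |R|‖v‖)² + (4PQ - R²)‖v‖²`.
  refine nonneg_of_mul_nonneg_right (a := 4 * Q) ?_ (by positivity)
  nlinarith [sq_nonneg (2 * Q * ‖u‖ - |R| * ‖v‖), sq_abs R,
    mul_nonneg (sub_nonneg.2 hR) (sq_nonneg ‖v‖)]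

-- The paper's `φ_k(z, w)`, with `(x, y, a, b) = (x_k, y_k, a_k, b_k)`.
def psmSeparator (x y a b z w : E) : ℝ := ⟪z - x, b - w⟫ + ⟪z - y, a + w⟫

theorem psmSeparator_sub_psmSeparator (x y a b z w z' w' : E) :
    psmSeparator x y a b z w - psmSeparator x y a b z' w'
      = ⟪z - z', a + b⟫ + ⟪w - w', x - y⟫ := by
  simp only [psmSeparator, inner_sub_left, inner_sub_right, inner_add_right,
    real_inner_comm x w, real_inner_comm x w', real_inner_comm y w, real_inner_comm y w']
  ring

theorem norm_sq_add_norm_sq_le_psmSeparator {x y a b z w : E} {L M α K : ℝ}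
    (hQ : 0 < K * M - 1 - M ^ 2)
    (hR : (K * α * L - 2 - 2 * M * L * (α - 1)) ^ 2
        ≤ 4 * (K * L - 1 - L ^ 2 * (α - 1) ^ 2) * (K * M - 1 - M ^ 2))
    (hx : L • b + x = z + L • w) (hy : M • a + y = (1 - α) • z + α • x - M • w) :
    ‖a + b‖ ^ 2 + ‖x - y‖ ^ 2 ≤ K * psmSeparator x y a b z w := by
  have hv : z - x = L • (b - w) := by linear_combination (norm := module) -hx
  have hu : z - y = (α * L) • (b - w) + M • (a + w) := by
    linear_combination (norm := module) -hy + α • hv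
  have hab : a + b = (a + w) + (b - w) := by abel
  have hxy : x - y = M • (a + w) + ((α - 1) * L) • (b - w) := by
    linear_combination (norm := module) hu - hv
  set u := a + w
  set v := b - w
  have hφ : psmSeparator x y a b z w = L * ‖v‖ ^ 2 + M * ‖u‖ ^ 2 + α * L * ⟪u, v⟫ := by
    change ⟪z - x, v⟫ + ⟪z - y, u⟫ = _
    simp only [hv, hu, inner_add_left, real_inner_smul_left, real_inner_self_eq_norm_sq,
      real_inner_comm v u]
    ring
  have hG : ‖a + b‖ ^ 2 + ‖x - y‖ ^ 2 = (1 + M ^ 2) * ‖u‖ ^ 2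
      + (1 + L ^ 2 * (α - 1) ^ 2) * ‖v‖ ^ 2 + (2 + 2 * M * L * (α - 1)) * ⟪u, v⟫ := by
    simp only [hab, hxy, ← real_inner_self_eq_norm_sq, inner_add_left, inner_add_right,
      real_inner_smul_left, real_inner_smul_right, real_inner_comm v u]
    ring
  rw [hφ, hG]
  linarith [inner_quadratic_nonneg u v hQ hR]

theorem norm_sq_add_norm_sq_sub_smul_le {z w p q g h : E} {ρ γ : ℝ} (hρ : 0 ≤ ρ)
    (hγ : γ ^ 2 * (‖g‖ ^ 2 + ‖h‖ ^ 2) ≤ γ * (⟪z - p, g⟫ + ⟪w - q, h⟫)) :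
    ‖z - (ρ * γ) • g - p‖ ^ 2 + ‖w - (ρ * γ) • h - q‖ ^ 2
        + ρ * (2 - ρ) * (γ ^ 2 * (‖g‖ ^ 2 + ‖h‖ ^ 2))
      ≤ ‖z - p‖ ^ 2 + ‖w - q‖ ^ 2 := by
  rw [sub_right_comm z, sub_right_comm w, norm_sub_sq_real (z - p), norm_sub_sq_real (w - q),
    norm_smul, norm_smul, inner_smul_right, inner_smul_right, mul_pow, mul_pow,
    Real.norm_eq_abs, sq_abs]
  nlinarith [mul_le_mul_of_nonneg_left hγ hρ]

end InnerProductSpace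

theorem psmSeparator_nonpos_of_mem_Se {n : ℕ} {A B : Euc n → Set (Euc n)} (hA : Mono A)
    (hB : Mono B) {x y a b : Euc n} (hb : b ∈ B x) (ha : a ∈ A y) {p : Euc n × Euc n}
    (hp : p ∈ Se A B) : psmSeparator x y a b p.1 p.2 ≤ 0 := by
  have hBp := hB _ _ _ _ hb hp.1
  have hAp := hA _ _ _ _ ha hp.2
  rw [sub_neg_eq_add] at hAp
  rw [psmSeparator, ← neg_sub x, ← neg_sub y, inner_neg_left, inner_neg_left]
  linarith

theorem psm_step_descent {n : ℕ} {A B : Euc n → Set (Euc n)} (hA : Mono A) (hB : Mono B)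
    {p : Euc n × Euc n} (hp : p ∈ Se A B) {x y a b z w : Euc n} (hb : b ∈ B x) (ha : a ∈ A y)
    {υ ρ ρbar γ : ℝ} (hυ : 0 < υ)
    (hG : ‖a + b‖ ^ 2 + ‖x - y‖ ^ 2 ≤ υ * psmSeparator x y a b z w)
    (hγ : γ = psmSeparator x y a b z w / (‖a + b‖ ^ 2 + ‖x - y‖ ^ 2))
    (hρbar : ρbar ≤ 1) (hρ : ρ ∈ Set.Icc (1 - ρbar) (1 + ρbar)) :
    ‖z - (ρ * γ) • (a + b) - p.1‖ ^ 2 + ‖w - (ρ * γ) • (x - y) - p.2‖ ^ 2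
        + ((1 - ρbar) / υ) ^ 2 * (‖a + b‖ ^ 2 + ‖x - y‖ ^ 2)
      ≤ ‖z - p.1‖ ^ 2 + ‖w - p.2‖ ^ 2 := by
  set N := ‖a + b‖ ^ 2 + ‖x - y‖ ^ 2
  set φ := psmSeparator x y a b z w
  have hN : 0 ≤ N := by positivity
  have hφ : 0 ≤ φ := nonneg_of_mul_nonneg_right (hN.trans hG) hυ
  have hγ0 : 0 ≤ γ := hγ ▸ div_nonneg hφ hN
  -- Also when `N = 0`: then `γ = φ / 0 = 0`.
  have hγN : γ ^ 2 * N = γ * φ := by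
    rcases hN.eq_or_lt with h | h
    · simp [hγ, ← h]
    · rw [hγ]; field_simp
  have hγN_ge : N / υ ^ 2 ≤ γ ^ 2 * N := by
    rcases hN.eq_or_lt with h | h
    · simp [← h]
    have : 1 / υ ≤ γ := by rw [hγ, div_le_div_iff₀ hυ h]; linarith
    calc N / υ ^ 2 = (1 / υ) ^ 2 * N := by ring
      _ ≤ γ ^ 2 * N := by gcongr
  have hφ_le : φ ≤ ⟪z - p.1, a + b⟫ + ⟪w - p.2, x - y⟫ := by
    rw [← psmSeparator_sub_psmSeparator x y a b z w p.1 p.2]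
    linarith [psmSeparator_nonpos_of_mem_Se hA hB hb ha hp]
  have hρ2 : (1 - ρbar) ^ 2 ≤ ρ * (2 - ρ) := by
    have hρbar0 : 0 ≤ ρbar := by linarith [hρ.1.trans hρ.2]
    nlinarith [mul_nonneg (sub_nonneg.2 hρ.1) (sub_nonneg.2 hρ.2),
      mul_nonneg hρbar0 (sub_nonneg.2 hρbar)]
  have hdesc := norm_sq_add_norm_sq_sub_smul_le (g := a + b) (h := x - y) (by linarith [hρ.1])
    (hγN ▸ mul_le_mul_of_nonneg_left hφ_le hγ0)
  calc _ = ‖z - (ρ * γ) • (a + b) - p.1‖ ^ 2 + ‖w - (ρ * γ) • (x - y) - p.2‖ ^ 2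
        + (1 - ρbar) ^ 2 * (N / υ ^ 2) := by ring
    _ ≤ _ + ρ * (2 - ρ) * (γ ^ 2 * N) := by gcongr; exact (sq_nonneg _).trans hρ2
    _ ≤ _ := hdesc

theorem exists_forall_mul_le_of_descent {ι : Type*} {S : Set ι} {D : ι → ℕ → ℝ} {G : ℕ → ℝ}
    (hD : ∀ p ∈ S, ∀ j, 0 ≤ D p j) (hstep : ∀ p ∈ S, ∀ j, D p (j + 1) + G (j + 1) ≤ D p j)
    {k : ℕ} (hk : 1 ≤ k) : ∃ i, 1 ≤ i ∧ i ≤ k ∧ ∀ p ∈ S, k * G i ≤ D p 0 := by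
  obtain ⟨i, hi, hmin⟩ := (Finset.range k).exists_min_image (fun j ↦ G (j + 1))
    (Finset.nonempty_range_iff.2 (by omega))
  refine ⟨i + 1, by omega, Finset.mem_range.1 hi, fun p hp ↦ ?_⟩
  calc k * G (i + 1) = ∑ _j ∈ Finset.range k, G (i + 1) := by simp
    _ ≤ ∑ j ∈ Finset.range k, (D p j - D p (j + 1)) :=
      Finset.sum_le_sum fun j hj ↦ (hmin j hj).trans (by linarith [hstep p hp j])
    _ = D p 0 - D p k := Finset.sum_range_sub' _ _
    _ ≤ D p 0 := by linarith [hD p hp k]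

theorem sqrt_le_sInf_sqrt {ι : Type*} {S : Set ι} (hS : S.Nonempty) {f : ι → ℝ} {t : ℝ}
    (ht : ∀ p ∈ S, t ≤ f p) : √t ≤ sInf {r | ∃ p ∈ S, r = √(f p)} := by
  obtain ⟨p, hp⟩ := hS
  refine le_csInf ⟨_, p, hp, rfl⟩ ?_
  rintro _ ⟨q, hq, rfl⟩
  exact Real.sqrt_le_sqrt (ht q hq)

theorem psm_pointwise_complexity_general {n : ℕ} (A B : Euc n → Set (Euc n))
    (hA : MaxMono A) (hB : MaxMono B) (hSe : (Se A B).Nonempty)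
    (x y a b z w : ℕ → Euc n) (lam mu alpha ρ γ : ℕ → ℝ)
    (lamLo lamHi ρbar ν d₀ : ℝ)
    (hlam : 0 < lamLo)
    (hA1 : ∀ k, 1 ≤ k → lam k ∈ Set.Icc lamLo lamHi ∧ mu k ∈ Set.Icc lamLo lamHi)
    (hρbar : ρbar ∈ Set.Ico (0 : ℝ) 1)
    (hA2 : ∀ k, 1 ≤ k → ρ k ∈ Set.Icc (1 - ρbar) (1 + ρbar))
    (hν : 0 < ν)
    (hA3 : ∀ k, 1 ≤ k → ν ≤ mu k / lam k - (alpha k / 2) ^ 2)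
    (hbB : ∀ k, 1 ≤ k → b k ∈ B (x k)) (haA : ∀ k, 1 ≤ k → a k ∈ A (y k))
    (hxb : ∀ k, 1 ≤ k → lam k • b k + x k = z (k - 1) + lam k • w (k - 1))
    (hya : ∀ k, 1 ≤ k →
      mu k • a k + y k = (1 - alpha k) • z (k - 1) + alpha k • x k - mu k • w (k - 1))
    (hγ : ∀ k, 1 ≤ k → γ k =
      (⟪z (k - 1) - x k, b k - w (k - 1)⟫ + ⟪z (k - 1) - y k, a k + w (k - 1)⟫)
        / (‖a k + b k‖ ^ 2 + ‖x k - y k‖ ^ 2))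
    (hz : ∀ k, 1 ≤ k → z k = z (k - 1) - (ρ k * γ k) • (a k + b k))
    (hw : ∀ k, 1 ≤ k → w k = w (k - 1) - (ρ k * γ k) • (x k - y k))
    (hd₀ : d₀ = sInf {r : ℝ | ∃ p ∈ Se A B,
      r = Real.sqrt (‖z 0 - p.1‖ ^ 2 + ‖w 0 - p.2‖ ^ 2)})
    (υ : ℝ)
    (hυ : υ = 2 * lamHi * (1 + lamHi ^ 2) * (1 + Real.sqrt (lamHi / lamLo))
      / (lamLo ^ 2 * ν)) :
    ∀ k : ℕ, 1 ≤ k →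
      (b k ∈ B (x k) ∧ a k ∈ A (y k)) ∧
      ∃ i : ℕ, 1 ≤ i ∧ i ≤ k ∧
        ‖a i + b i‖ ≤ d₀ * υ / (Real.sqrt k * (1 - ρbar)) ∧
        ‖x i - y i‖ ≤ d₀ * υ / (Real.sqrt k * (1 - ρbar)) := by
  intro k hk
  refine ⟨⟨hbB k hk, haA k hk⟩, ?_⟩
  have hρ1 : 0 < 1 - ρbar := sub_pos.2 hρbar.2
  have hυ0 : 0 < υ := by
    have : 0 < lamHi := hlam.trans_le ((hA1 1 le_rfl).1.1.trans (hA1 1 le_rfl).1.2)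
    rw [hυ]; positivity
  set N : ℕ → ℝ := fun j ↦ ‖a j + b j‖ ^ 2 + ‖x j - y j‖ ^ 2
  have hstep : ∀ p ∈ Se A B, ∀ j, ‖z (j + 1) - p.1‖ ^ 2 + ‖w (j + 1) - p.2‖ ^ 2
      + ((1 - ρbar) / υ) ^ 2 * N (j + 1) ≤ ‖z j - p.1‖ ^ 2 + ‖w j - p.2‖ ^ 2 := by
    intro p hp j
    have hj : 1 ≤ j + 1 := Nat.le_add_left 1 j
    obtain ⟨hQ, hR⟩ := psm_form_pos_and_discrim_le hlam (hA1 _ hj).1 (hA1 _ hj).2 hν (hA3 _ hj) hυ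
    have h := psm_step_descent hA.1 hB.1 hp (hbB _ hj) (haA _ hj) hυ0
      (norm_sq_add_norm_sq_le_psmSeparator hQ hR (hxb _ hj) (hya _ hj)) (hγ _ hj) hρbar.2.le
      (hA2 _ hj)
    rw [hz _ hj, hw _ hj]
    simpa only [Nat.add_sub_cancel] using h
  obtain ⟨i, hi1, hik, hi⟩ := exists_forall_mul_le_of_descent (S := Se A B)
    (D := fun p j ↦ ‖z j - p.1‖ ^ 2 + ‖w j - p.2‖ ^ 2)
    (G := fun j ↦ ((1 - ρbar) / υ) ^ 2 * N j) (fun p _ j ↦ by positivity) hstep hk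
  have hbound : √(N i) ≤ d₀ * υ / (√k * (1 - ρbar)) := by
    rw [le_div_iff₀ (by positivity), hd₀]
    calc √(N i) * (√k * (1 - ρbar)) = √(k * (((1 - ρbar) / υ) ^ 2 * N i)) * υ := by
          rw [Real.sqrt_mul' _ (by positivity), Real.sqrt_mul' _ (by positivity),
            Real.sqrt_sq (by positivity)]
          field_simp
      _ ≤ _ := by gcongr; exact sqrt_le_sInf_sqrt hSe hi
  exact ⟨i, hi1, hik, (Real.le_sqrt_of_sq_le (le_add_of_nonneg_right (sq_nonneg _))).trans hbound,
    (Real.le_sqrt_of_sq_le (le_add_of_nonneg_left (sq_nonneg _))).trans hbound⟩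

theorem psm_pointwise_complexity {n : ℕ} (A B : Euc n → Set (Euc n))
    (hA : MaxMono A) (hB : MaxMono B) (hSe : (Se A B).Nonempty)
    (x y a b z w : ℕ → Euc n) (lam mu alpha ρ γ : ℕ → ℝ)
    (lamLo lamHi ρbar ν d₀ : ℝ)
    (hlam : 0 < lamLo) (hlamle : lamLo ≤ lamHi)
    (hA1 : ∀ k, 1 ≤ k → lam k ∈ Set.Icc lamLo lamHi ∧ mu k ∈ Set.Icc lamLo lamHi)
    (hρbar : ρbar ∈ Set.Ico (0 : ℝ) 1)
    (hA2 : ∀ k, 1 ≤ k → ρ k ∈ Set.Icc (1 - ρbar) (1 + ρbar))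
    (hν : 0 < ν)
    (hA3 : ∀ k, 1 ≤ k → ν ≤ mu k / lam k - (alpha k / 2) ^ 2)
    (hbB : ∀ k, 1 ≤ k → b k ∈ B (x k)) (haA : ∀ k, 1 ≤ k → a k ∈ A (y k))
    (hxb : ∀ k, 1 ≤ k → lam k • b k + x k = z (k - 1) + lam k • w (k - 1))
    (hya : ∀ k, 1 ≤ k →
      mu k • a k + y k = (1 - alpha k) • z (k - 1) + alpha k • x k - mu k • w (k - 1))
    (hnt : ∀ k, 1 ≤ k → ‖a k + b k‖ ^ 2 + ‖x k - y k‖ ^ 2 ≠ 0)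
    (hγ : ∀ k, 1 ≤ k → γ k =
      (⟪z (k - 1) - x k, b k - w (k - 1)⟫ + ⟪z (k - 1) - y k, a k + w (k - 1)⟫)
        / (‖a k + b k‖ ^ 2 + ‖x k - y k‖ ^ 2))
    (hz : ∀ k, 1 ≤ k → z k = z (k - 1) - (ρ k * γ k) • (a k + b k))
    (hw : ∀ k, 1 ≤ k → w k = w (k - 1) - (ρ k * γ k) • (x k - y k))
    (hd₀ : d₀ = sInf {r : ℝ | ∃ p ∈ Se A B,
      r = Real.sqrt (‖z 0 - p.1‖ ^ 2 + ‖w 0 - p.2‖ ^ 2)})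
    (υ : ℝ)
    (hυ : υ = 2 * lamHi * (1 + lamHi ^ 2) * (1 + Real.sqrt (lamHi / lamLo))
      / (lamLo ^ 2 * ν)) :
    ∀ k : ℕ, 1 ≤ k →
      (b k ∈ B (x k) ∧ a k ∈ A (y k)) ∧
      ∃ i : ℕ, 1 ≤ i ∧ i ≤ k ∧
        ‖a i + b i‖ ≤ d₀ * υ / (Real.sqrt k * (1 - ρbar)) ∧
        ‖x i - y i‖ ≤ d₀ * υ / (Real.sqrt k * (1 - ρbar)) :=
  psm_pointwise_complexity_general A B hA hB hSe x y a b z w lam mu alpha ρ γ lamLo lamHi ρbar ν d₀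
    hlam hA1 hρbar hA2 hν hA3 hbB haA hxb hya hγ hz hw hd₀ υ hυ
end

section
/- In Spingarn's splitting method with η > 0: η b_k + x_k = z_{k-1} + η w_{k-1}, b_k ∈ B(x_k); η a_k + y_k = z_{k-1} - η w_{k-1}, a_k ∈ A(y_k); z_k = (1-ρ_k)z_{k-1} + (ρ_k/2)(x_k + y_k); w_k = (1-ρ_k)w_{k-1} + (ρ_k/2)(b_k - a_k), with ρ_k ∈ [1-ρ̄, 1+ρ̄], ρ̄ ∈ [0,1), for each k there exists 1 ≤ i ≤ k such that ‖a_i + b_i‖ ≤ 2d₀/(η√k(1-ρ̄)) and ‖x_i - y_i‖ ≤ 2d₀/(√k(1-ρ̄)), where d₀ = dist((z_0, ηw_0), S_e(ηA, ηB)). -/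
open RealInnerProductSpace Finset

/-!
Write `ω = η w`. One iteration of Spingarn's method is a relaxed step
`(z, ω) ↦ (z, ω) - (ρ/2) (η(a + b), x - y)`, and monotonicity of `A` and `B` at the new points
against any `(z*, ω*) ∈ S_e(ηA, ηB)` shows that the step direction `d` satisfies
`⟪(z, ω) - (z*, ω*), d⟫ ≥ ‖d‖²/2`. Hence the squared distance to `(z*, ω*)` drops by at least
`ρ(2 - ρ)/4 ‖d‖² ≥ (1 - ρ̄)²/4 ‖d‖²` per iteration. Summing over `k` iterations, the smallest
`‖d_i‖²`, `i ≤ k`, is at most `4 d₀² / (k (1 - ρ̄)²)`.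
-/

section InnerProductSpace

variable {E : Type*} [NormedAddCommGroup E] [InnerProductSpace ℝ E]

lemma norm_sub_smul_sq_add_le (u₁ u₂ d₁ d₂ : E) {ρ : ℝ} (hρ : 0 ≤ ρ)
    (h : (‖d₁‖ ^ 2 + ‖d₂‖ ^ 2) / 2 ≤ ⟪u₁, d₁⟫ + ⟪u₂, d₂⟫) :
    ‖u₁ - (ρ / 2) • d₁‖ ^ 2 + ‖u₂ - (ρ / 2) • d₂‖ ^ 2 ≤
      ‖u₁‖ ^ 2 + ‖u₂‖ ^ 2 - ρ * (2 - ρ) / 4 * (‖d₁‖ ^ 2 + ‖d₂‖ ^ 2) := by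
  simp only [norm_sub_sq_real, real_inner_smul_right, norm_smul, mul_pow, Real.norm_eq_abs,
    sq_abs]
  nlinarith [mul_le_mul_of_nonneg_left h hρ]

/-- The right side equals the left side plus `⟪x - zs, β - ωs⟫ + ⟪y - zs, α + ωs⟫`. -/
lemma half_norm_sq_add_le_inner_add_inner {z ω α β x y zs ωs : E}
    (hx : x = z + ω - β) (hy : y = z - ω - α)
    (hB : 0 ≤ ⟪x - zs, β - ωs⟫) (hA : 0 ≤ ⟪y - zs, α + ωs⟫) :
    (‖α + β‖ ^ 2 + ‖x - y‖ ^ 2) / 2 ≤ ⟪z - zs, α + β⟫ + ⟪ω - ωs, x - y⟫ := by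
  subst hx hy
  simp only [← real_inner_self_eq_norm_sq, inner_add_left, inner_add_right, inner_sub_left,
    inner_sub_right] at hA hB ⊢
  linarith [real_inner_comm z ω, real_inner_comm z α, real_inner_comm z β,
    real_inner_comm z zs, real_inner_comm z ωs, real_inner_comm ω α,
    real_inner_comm ω β, real_inner_comm ω zs, real_inner_comm ω ωs,
    real_inner_comm α β, real_inner_comm α zs, real_inner_comm α ωs,
    real_inner_comm β zs, real_inner_comm β ωs, real_inner_comm zs ωs]

end InnerProductSpace

lemma sq_one_sub_le_mul_two_sub {r ρ : ℝ} (hr : r ∈ Set.Icc 0 1)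
    (hρ : ρ ∈ Set.Icc (1 - r) (1 + r)) : (1 - r) ^ 2 ≤ ρ * (2 - ρ) := by
  obtain ⟨hr₀, hr₁⟩ := hr
  obtain ⟨hρ₁, hρ₂⟩ := hρ
  nlinarith

lemma mul_sum_range_le_of_add_mul_le {φ S : ℕ → ℝ} {c : ℝ} (hφ : ∀ k, 0 ≤ φ k)
    (h : ∀ k, φ (k + 1) + c * S (k + 1) ≤ φ k) (k : ℕ) :
    c * ∑ i ∈ range k, S (i + 1) ≤ φ 0 := by
  suffices φ k + c * ∑ i ∈ range k, S (i + 1) ≤ φ 0 by linarith [hφ k]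
  induction k with
  | zero => simp
  | succ k ih => rw [sum_range_succ]; linarith [h k]

lemma exists_mul_le_sum_range (f : ℕ → ℝ) {k : ℕ} (hk : 0 < k) :
    ∃ i < k, k * f i ≤ ∑ j ∈ range k, f j := by
  obtain ⟨i, hi, hmin⟩ := exists_min_image (range k) f (nonempty_range_iff.mpr hk.ne')
  refine ⟨i, mem_range.mp hi, ?_⟩
  simpa using card_nsmul_le_sum (range k) f (f i) hmin

lemma le_sInf_sqrt {α : Type*} {s : Set α} (hs : s.Nonempty) {f : α → ℝ} {t : ℝ}
    (h : ∀ p ∈ s, t ^ 2 ≤ f p) : t ≤ sInf {r : ℝ | ∃ p ∈ s, r = √(f p)} := by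
  obtain ⟨p, hp⟩ := hs
  refine le_csInf ⟨_, p, hp, rfl⟩ ?_
  rintro r ⟨q, hq, rfl⟩
  exact (le_abs_self t).trans (Real.abs_le_sqrt (h q hq))

lemma spingarn_step_dist_sq_le {n : ℕ} {A B : Euc n → Set (Euc n)} (hA : Mono A) (hB : Mono B)
    {p : Euc n × Euc n} (hp : p ∈ Se A B) {η ρ : ℝ} (hη : 0 ≤ η) (hρ : 0 ≤ ρ)
    {z w x y a b : Euc n} (hb : b ∈ B x) (ha : a ∈ A y)
    (hxb : η • b + x = z + η • w) (hya : η • a + y = z - η • w) :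
    ‖(1 - ρ) • z + (ρ / 2) • (x + y) - p.1‖ ^ 2 +
        ‖η • ((1 - ρ) • w + (ρ / 2) • (b - a)) - η • p.2‖ ^ 2 ≤
      ‖z - p.1‖ ^ 2 + ‖η • w - η • p.2‖ ^ 2 -
        ρ * (2 - ρ) / 4 * (‖η • (a + b)‖ ^ 2 + ‖x - y‖ ^ 2) := by
  have hx : x = z + η • w - η • b := by rw [← hxb]; abel
  have hy : y = z - η • w - η • a := by rw [← hya]; abel
  have hBp : 0 ≤ ⟪x - p.1, η • b - η • p.2⟫ := by
    rw [← smul_sub, real_inner_smul_right]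
    exact mul_nonneg hη (hB _ _ _ _ hb hp.1)
  have hAp : 0 ≤ ⟪y - p.1, η • a + η • p.2⟫ := by
    rw [← smul_add, real_inner_smul_right, ← sub_neg_eq_add]
    exact mul_nonneg hη (hA _ _ _ _ ha hp.2)
  have key := half_norm_sq_add_le_inner_add_inner hx hy hBp hAp
  have hz' : (1 - ρ) • z + (ρ / 2) • (x + y) - p.1 = (z - p.1) - (ρ / 2) • (η • a + η • b) := by
    rw [hx, hy]; module
  have hw' : η • ((1 - ρ) • w + (ρ / 2) • (b - a)) - η • p.2 =
      (η • w - η • p.2) - (ρ / 2) • (x - y) := by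
    rw [hx, hy]; module
  rw [hz', hw', smul_add η a b]
  exact norm_sub_smul_sq_add_le _ _ _ _ hρ key

theorem spingarn_pointwise_complexity_general {n : ℕ} (A B : Euc n → Set (Euc n))
    (hA : MaxMono A) (hB : MaxMono B) (hSe : (Se A B).Nonempty)
    (η : ℝ) (hη : 0 < η)
    (x y a b z w : ℕ → Euc n) (ρ : ℕ → ℝ) (ρbar d₀ : ℝ)
    (hρbar : ρbar ∈ Set.Ico (0 : ℝ) 1)
    (hρ : ∀ k, 1 ≤ k → ρ k ∈ Set.Icc (1 - ρbar) (1 + ρbar))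
    (hbB : ∀ k, 1 ≤ k → b k ∈ B (x k)) (haA : ∀ k, 1 ≤ k → a k ∈ A (y k))
    (hxb : ∀ k, 1 ≤ k → η • b k + x k = z (k - 1) + η • w (k - 1))
    (hya : ∀ k, 1 ≤ k → η • a k + y k = z (k - 1) - η • w (k - 1))
    (hz : ∀ k, 1 ≤ k → z k = (1 - ρ k) • z (k - 1) + (ρ k / 2) • (x k + y k))
    (hw : ∀ k, 1 ≤ k → w k = (1 - ρ k) • w (k - 1) + (ρ k / 2) • (b k - a k))
    (hd₀ : d₀ = sInf {r : ℝ | ∃ p ∈ Se A B,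
      r = Real.sqrt (‖z 0 - p.1‖ ^ 2 + ‖η • w 0 - η • p.2‖ ^ 2)}) :
    ∀ k : ℕ, 1 ≤ k →
      ∃ i : ℕ, 1 ≤ i ∧ i ≤ k ∧
        ‖a i + b i‖ ≤ 2 * d₀ / (η * Real.sqrt k * (1 - ρbar)) ∧
        ‖x i - y i‖ ≤ 2 * d₀ / (Real.sqrt k * (1 - ρbar)) := by
  intro k hk
  obtain ⟨hρbar₀, hρbar₁⟩ := hρbar
  set S : ℕ → ℝ := fun j => ‖η • (a j + b j)‖ ^ 2 + ‖x j - y j‖ ^ 2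
  set φ : Euc n × Euc n → ℕ → ℝ := fun p j => ‖z j - p.1‖ ^ 2 + ‖η • w j - η • p.2‖ ^ 2
  have descent : ∀ p ∈ Se A B, ∀ j, φ p (j + 1) + (1 - ρbar) ^ 2 / 4 * S (j + 1) ≤ φ p j := by
    intro p hp j
    have hj : 1 ≤ j + 1 := Nat.le_add_left 1 j
    have hρc := sq_one_sub_le_mul_two_sub ⟨hρbar₀, hρbar₁.le⟩ (hρ _ hj)
    have step := spingarn_step_dist_sq_le hA.1 hB.1 hp hη.le (by nlinarith) (hbB _ hj)
      (haA _ hj) (hxb _ hj) (hya _ hj)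
    rw [← hz _ hj, ← hw _ hj, Nat.add_sub_cancel] at step
    have hSnn : 0 ≤ S (j + 1) := by positivity
    nlinarith [mul_le_mul_of_nonneg_right hρc hSnn]
  obtain ⟨i, hik, hi⟩ := exists_mul_le_sum_range (fun j => S (j + 1)) hk
  have hden : 0 < √(k : ℝ) * (1 - ρbar) :=
    mul_pos (Real.sqrt_pos.mpr (by exact_mod_cast hk)) (sub_pos.mpr hρbar₁)
  have bound : ∀ u, 0 ≤ u → u ^ 2 ≤ S (i + 1) → u * (√k * (1 - ρbar)) ≤ 2 * d₀ := by
    intro u hu huS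
    suffices u * √k * (1 - ρbar) / 2 ≤ d₀ by linarith
    rw [hd₀]
    refine le_sInf_sqrt hSe fun p hp => ?_
    calc (u * √k * (1 - ρbar) / 2) ^ 2 = (1 - ρbar) ^ 2 / 4 * (k * u ^ 2) := by
          rw [div_pow, mul_pow, mul_pow, Real.sq_sqrt (Nat.cast_nonneg k)]; ring
      _ ≤ (1 - ρbar) ^ 2 / 4 * ∑ j ∈ range k, S (j + 1) := by gcongr; exact hi.trans' (by gcongr)
      _ ≤ φ p 0 := mul_sum_range_le_of_add_mul_le (fun _ => by positivity) (descent p hp) k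
  refine ⟨i + 1, by omega, hik, ?_, ?_⟩
  · rw [mul_assoc, le_div_iff₀ (mul_pos hη hden)]
    have hab := bound (η * ‖a (i + 1) + b (i + 1)‖) (by positivity) (by
      rw [← norm_smul_of_nonneg hη.le]; exact le_add_of_nonneg_right (by positivity))
    linarith
  · rw [le_div_iff₀ hden]
    exact bound _ (norm_nonneg _) (le_add_of_nonneg_left (by positivity))

theorem spingarn_pointwise_complexity {n : ℕ} (A B : Euc n → Set (Euc n))
    (hA : MaxMono A) (hB : MaxMono B) (hSe : (Se A B).Nonempty)
    (η : ℝ) (hη : 0 < η)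
    (x y a b z w : ℕ → Euc n) (ρ : ℕ → ℝ) (ρbar d₀ : ℝ)
    (hρbar : ρbar ∈ Set.Ico (0 : ℝ) 1)
    (hρ : ∀ k, 1 ≤ k → ρ k ∈ Set.Icc (1 - ρbar) (1 + ρbar))
    (hbB : ∀ k, 1 ≤ k → b k ∈ B (x k)) (haA : ∀ k, 1 ≤ k → a k ∈ A (y k))
    (hxb : ∀ k, 1 ≤ k → η • b k + x k = z (k - 1) + η • w (k - 1))
    (hya : ∀ k, 1 ≤ k → η • a k + y k = z (k - 1) - η • w (k - 1))
    (hz : ∀ k, 1 ≤ k → z k = (1 - ρ k) • z (k - 1) + (ρ k / 2) • (x k + y k))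
    (hw : ∀ k, 1 ≤ k → w k = (1 - ρ k) • w (k - 1) + (ρ k / 2) • (b k - a k))
    (hnt : ∀ k, 1 ≤ k → ¬(a k + b k = 0 ∧ x k - y k = 0))
    (hd₀ : d₀ = sInf {r : ℝ | ∃ p ∈ Se A B,
      r = Real.sqrt (‖z 0 - p.1‖ ^ 2 + ‖η • w 0 - η • p.2‖ ^ 2)}) :
    ∀ k : ℕ, 1 ≤ k →
      ∃ i : ℕ, 1 ≤ i ∧ i ≤ k ∧
        ‖a i + b i‖ ≤ 2 * d₀ / (η * Real.sqrt k * (1 - ρbar)) ∧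
        ‖x i - y i‖ ≤ 2 * d₀ / (Real.sqrt k * (1 - ρbar)) :=
  spingarn_pointwise_complexity_general A B hA hB hSe η hη x y a b z w ρ ρbar d₀ hρbar hρ hbB haA
    hxb hya hz hw hd₀
end

section
/- In the parallel inexact projective splitting method with error tolerance σ ∈ [0,1), where b_k ∈ B^{ε^x_k}(x_k) with λ_k(b_k - w_{k-1}) = z_{k-1} - x_k + r^x_k and ‖r^x_k‖² + 2λ_kε^x_k ≤ σ(‖x_k - z_{k-1}‖² + ‖λ_k(b_k - w_{k-1})‖²), and a_k ∈ A^{ε^y_k}(y_k) with the analogous condition for parameter μ_k, the decomposable separator φ_k associated with (x_k,b_k,ε^x_k) and (y_k,a_k,ε^y_k) satisfies φ_k(z_{k-1},w_{k-1}) ≥ ((1-σ)/4) ξ_k (‖a_k+b_k‖² + ‖x_k-y_k‖²) ≥ 0, where ξ_k = min{λ_k, 1/λ_k, μ_k, 1/μ_k}. Moreover ∇φ_k = 0 implies (x_k, b_k) = (y_k, -a_k) ∈ S_e(A,B). -/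
/-!
Each half of the separator is controlled by its own inexact proximal step. Writing `u = b - w`,
the residual is `r = λu - (z - x)`, so expanding `‖r‖²` turns the error criterion into
`2λ(⟪z - x, u⟫ - ε) ≥ (1 - σ)(‖x - z‖² + λ²‖u‖²)`. After dividing by `2λ` and bounding `λ` and
`1/λ` below by `ξ`, the two halves add up to `(1 - σ)/2 · ξ` times
`‖x - z‖² + ‖b - w‖² + ‖y - z‖² + ‖a + w‖²`, which dominates `(‖a + b‖² + ‖x - y‖²)/2` since
`‖p + q‖² ≤ 2(‖p‖² + ‖q‖²)`.

When the gradient vanishes the separator at `(z, w)` reduces to `-εx - εy`, so both tolerances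
are zero, and the `0`-enlargement of a maximal monotone operator is the operator itself.
-/

open RealInnerProductSpace Finset

/-- Adjoining `(z, v)` to the graph keeps `T` monotone, so by maximality it was already there. -/
lemma MaxMono.mem_of_mem_enl_zero {n : ℕ} {T : Euc n → Set (Euc n)} (hT : MaxMono T)
    {z v : Euc n} (h : v ∈ enl T 0 z) : v ∈ T z := by
  let S : Euc n → Set (Euc n) := fun z₀ => T z₀ ∪ {u | z₀ = z ∧ u = v}
  have hS : Mono S := by
    rintro z₁ v₁ z₂ v₂ (h₁ | ⟨rfl, rfl⟩) (h₂ | ⟨rfl, rfl⟩)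
    · exact hT.1 _ _ _ _ h₁ h₂
    · simpa using h z₁ v₁ h₁
    · simpa [← inner_neg_neg (z₁ - z₂)] using h z₂ v₂ h₂
    · simp
  rw [← hT.2 S hS (fun _ => Set.subset_union_left) z]
  exact Or.inr ⟨rfl, rfl⟩

lemma norm_add_sq_le_two_mul {E : Type*} [SeminormedAddGroup E] (p q : E) :
    ‖p + q‖ ^ 2 ≤ 2 * (‖p‖ ^ 2 + ‖q‖ ^ 2) :=
  (pow_le_pow_left₀ (norm_nonneg _) (norm_add_le p q) 2).trans add_sq_le

section InexactStep

variable {E : Type*} [NormedAddCommGroup E] [InnerProductSpace ℝ E]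

lemma two_mul_inner_eq_of_smul_eq_add {lam : ℝ} {z x u r : E} (h : lam • u = z - x + r) :
    2 * lam * ⟪z - x, u⟫ = ‖x - z‖ ^ 2 + ‖lam • u‖ ^ 2 - ‖r‖ ^ 2 := by
  obtain rfl : r = lam • u - (z - x) := by rw [h]; abel
  rw [norm_sub_sq_real (lam • u), real_inner_smul_left, real_inner_comm, norm_sub_rev]
  ring

lemma inexact_step_lower_bound {σ lam ε : ℝ} (hlam : 0 < lam) {z x u r : E}
    (heq : lam • u = z - x + r)
    (herr : ‖r‖ ^ 2 + 2 * lam * ε ≤ σ * (‖x - z‖ ^ 2 + ‖lam • u‖ ^ 2)) :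
    (1 - σ) / 2 * (1 / lam * ‖x - z‖ ^ 2 + lam * ‖u‖ ^ 2) ≤ ⟪z - x, u⟫ - ε := by
  have hinner := two_mul_inner_eq_of_smul_eq_add heq
  have hnorm : ‖lam • u‖ ^ 2 = lam ^ 2 * ‖u‖ ^ 2 := by
    rw [norm_smul, mul_pow, Real.norm_eq_abs, sq_abs]
  rw [hnorm] at hinner herr
  rw [← mul_le_mul_iff_right₀ (by positivity : 0 < 2 * lam)]
  calc 2 * lam * ((1 - σ) / 2 * (1 / lam * ‖x - z‖ ^ 2 + lam * ‖u‖ ^ 2))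
      = (1 - σ) * (‖x - z‖ ^ 2 + lam ^ 2 * ‖u‖ ^ 2) := by field_simp
    _ ≤ 2 * lam * (⟪z - x, u⟫ - ε) := by linarith

lemma inexact_step_lower_bound_of_le_min {σ lam ε ξ : ℝ} (hσ : σ ≤ 1) (hlam : 0 < lam)
    (hξ : ξ ≤ min lam (1 / lam)) {z x u r : E}
    (heq : lam • u = z - x + r)
    (herr : ‖r‖ ^ 2 + 2 * lam * ε ≤ σ * (‖x - z‖ ^ 2 + ‖lam • u‖ ^ 2)) :
    (1 - σ) / 2 * ξ * (‖x - z‖ ^ 2 + ‖u‖ ^ 2) ≤ ⟪z - x, u⟫ - ε := by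
  have hscale : ξ * (‖x - z‖ ^ 2 + ‖u‖ ^ 2) ≤ 1 / lam * ‖x - z‖ ^ 2 + lam * ‖u‖ ^ 2 := by
    rw [mul_add]
    exact add_le_add (mul_le_mul_of_nonneg_right (hξ.trans (min_le_right _ _)) (sq_nonneg _))
      (mul_le_mul_of_nonneg_right (hξ.trans (min_le_left _ _)) (sq_nonneg _))
  calc (1 - σ) / 2 * ξ * (‖x - z‖ ^ 2 + ‖u‖ ^ 2)
      ≤ (1 - σ) / 2 * (1 / lam * ‖x - z‖ ^ 2 + lam * ‖u‖ ^ 2) := by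
        rw [mul_assoc]; exact mul_le_mul_of_nonneg_left hscale (by linarith)
    _ ≤ ⟪z - x, u⟫ - ε := inexact_step_lower_bound hlam heq herr

end InexactStep

theorem parallel_inexact_separator_bound {n : ℕ} (A B : Euc n → Set (Euc n))
    (hA : MaxMono A) (hB : MaxMono B)
    (σ lam mu εx εy : ℝ) (hσ : σ ∈ Set.Ico (0 : ℝ) 1)
    (hlam : 0 < lam) (hmu : 0 < mu) (hεx : 0 ≤ εx) (hεy : 0 ≤ εy)
    (z w x b y a rx ry : Euc n)
    (hbB : b ∈ enl B εx x)
    (hbeq : lam • (b - w) = z - x + rx)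
    (hberr : ‖rx‖ ^ 2 + 2 * lam * εx ≤ σ * (‖x - z‖ ^ 2 + ‖lam • (b - w)‖ ^ 2))
    (haA : a ∈ enl A εy y)
    (haeq : mu • (a + w) = z - y + ry)
    (haerr : ‖ry‖ ^ 2 + 2 * mu * εy ≤ σ * (‖y - z‖ ^ 2 + ‖mu • (a + w)‖ ^ 2))
    (ξ : ℝ) (hξ : ξ = min (min lam (1 / lam)) (min mu (1 / mu))) :
    (⟪z - x, b - w⟫ + ⟪z - y, a + w⟫ - εx - εy
      ≥ (1 - σ) / 4 * ξ * (‖a + b‖ ^ 2 + ‖x - y‖ ^ 2)) ∧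
    (0 ≤ (1 - σ) / 4 * ξ * (‖a + b‖ ^ 2 + ‖x - y‖ ^ 2)) ∧
    (a + b = 0 → x - y = 0 → x = y ∧ b = -a ∧ (x, b) ∈ Se A B) := by
  have hσ1 : 0 ≤ 1 - σ := by linarith [hσ.2]
  have hξ0 : 0 ≤ ξ := hξ ▸ by positivity
  have hx := inexact_step_lower_bound_of_le_min hσ.2.le hlam (hξ ▸ min_le_left _ _) hbeq hberr
  have hy := inexact_step_lower_bound_of_le_min hσ.2.le hmu (hξ ▸ min_le_right _ _) haeq haerr
  have hab : ‖a + b‖ ^ 2 ≤ 2 * (‖b - w‖ ^ 2 + ‖a + w‖ ^ 2) := by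
    simpa [add_comm a b] using norm_add_sq_le_two_mul (b - w) (a + w)
  have hxy : ‖x - y‖ ^ 2 ≤ 2 * (‖x - z‖ ^ 2 + ‖y - z‖ ^ 2) := by
    simpa [norm_sub_rev z y] using norm_add_sq_le_two_mul (x - z) (z - y)
  have hbound : ⟪z - x, b - w⟫ + ⟪z - y, a + w⟫ - εx - εy
      ≥ (1 - σ) / 4 * ξ * (‖a + b‖ ^ 2 + ‖x - y‖ ^ 2) := by
    have := mul_le_mul_of_nonneg_left (add_le_add hab hxy) (by positivity : 0 ≤ (1 - σ) / 4 * ξ)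
    linarith
  refine ⟨hbound, by positivity, fun hab0 hxy0 => ?_⟩
  obtain rfl : x = y := sub_eq_zero.mp hxy0
  obtain rfl : b = -a := eq_neg_of_add_eq_zero_right hab0
  have hφ : ⟪z - x, -a - w⟫ + ⟪z - x, a + w⟫ = 0 := by
    rw [← inner_add_right]; simp
  simp only [hab0, hxy0, norm_zero] at hbound
  obtain rfl : εx = 0 := by linarith
  obtain rfl : εy = 0 := by linarith
  exact ⟨rfl, rfl, hB.mem_of_mem_enl_zero hbB, by simpa using hA.mem_of_mem_enl_zero haA⟩
end

section
/- In the sequential inexact projective splitting method with σ ∈ [0,1/2), where λ_k b_k + x_k = z_{k-1} + λ_k w_{k-1} with b_k ∈ B(x_k) (exact), and λ_k a_k + y_k = x_k - λ_k w_{k-1} + r_k with a_k ∈ A^{ε^y_k}(y_k) and ‖r_k‖² + 2λ_k ε^y_k ≤ σ(‖y_k - x_k‖² + ‖λ_k(a_k + w_{k-1})‖²), the separator φ_k(z,w) = ⟨z-x_k, b_k-w⟩ + ⟨z-y_k, a_k+w⟩ - ε^y_k satisfies φ_k(z_{k-1},w_{k-1}) ≥ ((1-2σ)/2) τ_k (‖a_k+b_k‖²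 + ‖x_k-y_k‖²) ≥ 0, where τ_k = min{λ_k, 1/λ_k}. -/
open RealInnerProductSpace Finset

/-!
Write `u = b - w` and `v = a + w`, so that `a + b = u + v`. The two update equations give
`z - x = λ u` and `x - y = λ v - r`, and expanding the inner products yields the identity
`2λ (⟪z - x, u⟫ + ⟪z - y, v⟫) = ‖λ(a + b)‖² + ‖λ u‖² + ‖x - y‖² - ‖r‖²`.
The error criterion bounds `‖r‖² + 2λε` by `σ (‖x - y‖² + ‖λ v‖²)`, and the parallelogram law
gives `‖λ v‖² ≤ 2‖λ(a + b)‖² + 2‖λ u‖²`; hence `2λ φ ≥ (1 - 2σ)(λ²‖a + b‖² + ‖x - y‖²)`.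
Finally `λ τ ≤ λ²` and `λ τ ≤ 1` for `τ = min λ λ⁻¹`.
-/

section InnerProductSpace

variable {E : Type*} [NormedAddCommGroup E] [InnerProductSpace ℝ E]

theorem norm_sub_sq_le_two_mul (x y : E) : ‖x - y‖ ^ 2 ≤ 2 * (‖x‖ ^ 2 + ‖y‖ ^ 2) := by
  have := parallelogram_law_with_norm ℝ x y
  nlinarith [sq_nonneg ‖x + y‖]

theorem two_mul_separator_eq {lam : ℝ} {z w x b y a r : E}
    (hzx : z - x = lam • (b - w)) (hxy : x - y = lam • (a + w) - r) :
    2 * lam * (⟪z - x, b - w⟫ + ⟪z - y, a + w⟫)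
      = ‖lam • (a + b)‖ ^ 2 + ‖lam • (b - w)‖ ^ 2 + ‖x - y‖ ^ 2 - ‖r‖ ^ 2 := by
  have hzy : z - y = lam • (b - w) + (lam • (a + w) - r) := by
    rw [← hzx, ← hxy]; abel
  have hab : a + b = (b - w) + (a + w) := by abel
  rw [hzy, hxy, hzx, hab]
  simp only [← real_inner_self_eq_norm_sq, inner_add_left, inner_add_right, inner_sub_left,
    inner_sub_right, real_inner_smul_left, real_inner_smul_right, real_inner_comm (b - w),
    real_inner_comm r]
  ring

theorem separator_lower_bound {σ lam εy : ℝ} (hσ0 : 0 ≤ σ) (hσ_half : 2 * σ ≤ 1)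
    (hlam : 0 < lam) {z w x b y a r : E}
    (hbeq : lam • b + x = z + lam • w)
    (haeq : lam • a + y = x - lam • w + r)
    (haerr : ‖r‖ ^ 2 + 2 * lam * εy ≤ σ * (‖y - x‖ ^ 2 + ‖lam • (a + w)‖ ^ 2)) :
    (1 - 2 * σ) * (lam ^ 2 * ‖a + b‖ ^ 2 + ‖x - y‖ ^ 2)
      ≤ 2 * lam * (⟪z - x, b - w⟫ + ⟪z - y, a + w⟫ - εy) := by
  have hzx : z - x = lam • (b - w) := by linear_combination (norm := module) -hbeq
  have hxy : x - y = lam • (a + w) - r := by linear_combination (norm := module) -haeq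
  have hparallel : ‖lam • (a + w)‖ ^ 2 ≤ 2 * (‖lam • (a + b)‖ ^ 2 + ‖lam • (b - w)‖ ^ 2) := by
    have : lam • (a + w) = lam • (a + b) - lam • (b - w) := by module
    exact this ▸ norm_sub_sq_le_two_mul _ _
  have hscale : ‖lam • (a + b)‖ ^ 2 = lam ^ 2 * ‖a + b‖ ^ 2 := by
    rw [norm_smul, Real.norm_eq_abs, abs_of_pos hlam, mul_pow]
  rw [norm_sub_rev] at haerr
  rw [mul_sub, two_mul_separator_eq hzx hxy, ← hscale]
  linarith [mul_nonneg (sub_nonneg.2 hσ_half) (sq_nonneg ‖lam • (b - w)‖),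
    mul_nonneg hσ0 (sq_nonneg ‖x - y‖),
    mul_le_mul_of_nonneg_left hparallel hσ0]

end InnerProductSpace

theorem mul_min_inv_mul_add_le {lam p d : ℝ} (hlam : 0 < lam) (hp : 0 ≤ p) (hd : 0 ≤ d) :
    lam * min lam (1 / lam) * (p + d) ≤ lam ^ 2 * p + d := by
  have hle_sq : lam * min lam (1 / lam) ≤ lam ^ 2 := by
    rw [sq]; exact mul_le_mul_of_nonneg_left (min_le_left _ _) hlam.le
  have hle_one : lam * min lam (1 / lam) ≤ 1 := by
    calc lam * min lam (1 / lam) ≤ lam * (1 / lam) :=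
          mul_le_mul_of_nonneg_left (min_le_right _ _) hlam.le
      _ = 1 := by field_simp
  linarith [mul_le_mul_of_nonneg_right hle_sq hp, mul_le_mul_of_nonneg_right hle_one hd]

theorem sequential_inexact_separator_bound_general {n : ℕ}
    (σ lam εy : ℝ) (hσ : σ ∈ Set.Ico (0 : ℝ) (1 / 2))
    (hlam : 0 < lam)
    (z w x b y a r : Euc n)
    (hbeq : lam • b + x = z + lam • w)
    (haeq : lam • a + y = x - lam • w + r)
    (haerr : ‖r‖ ^ 2 + 2 * lam * εy ≤ σ * (‖y - x‖ ^ 2 + ‖lam • (a + w)‖ ^ 2))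
    (τ : ℝ) (hτ : τ = min lam (1 / lam)) :
    (⟪z - x, b - w⟫ + ⟪z - y, a + w⟫ - εy
      ≥ (1 - 2 * σ) / 2 * τ * (‖a + b‖ ^ 2 + ‖x - y‖ ^ 2)) ∧
    (0 ≤ (1 - 2 * σ) / 2 * τ * (‖a + b‖ ^ 2 + ‖x - y‖ ^ 2)) := by
  obtain ⟨hσ0, hσ_half⟩ := hσ
  have hcoeff : 0 ≤ 1 - 2 * σ := by linarith
  have hτ0 : 0 < τ := hτ ▸ lt_min hlam (by positivity)
  have hbound := separator_lower_bound hσ0 (by linarith) hlam hbeq haeq haerr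
  have hτ_bound := mul_min_inv_mul_add_le hlam (sq_nonneg ‖a + b‖) (sq_nonneg ‖x - y‖)
  rw [← hτ] at hτ_bound
  refine ⟨?_, by positivity⟩
  rw [ge_iff_le, ← mul_le_mul_iff_right₀ (by positivity : 0 < 2 * lam)]
  calc 2 * lam * ((1 - 2 * σ) / 2 * τ * (‖a + b‖ ^ 2 + ‖x - y‖ ^ 2))
      = (1 - 2 * σ) * (lam * τ * (‖a + b‖ ^ 2 + ‖x - y‖ ^ 2)) := by ring
    _ ≤ (1 - 2 * σ) * (lam ^ 2 * ‖a + b‖ ^ 2 + ‖x - y‖ ^ 2) :=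
      mul_le_mul_of_nonneg_left hτ_bound hcoeff
    _ ≤ _ := hbound

theorem sequential_inexact_separator_bound {n : ℕ} (A B : Euc n → Set (Euc n))
    (hA : MaxMono A) (hB : MaxMono B)
    (σ lam εy : ℝ) (hσ : σ ∈ Set.Ico (0 : ℝ) (1 / 2))
    (hlam : 0 < lam) (hεy : 0 ≤ εy)
    (z w x b y a r : Euc n)
    (hbB : b ∈ B x)
    (hbeq : lam • b + x = z + lam • w)
    (haA : a ∈ enl A εy y)
    (haeq : lam • a + y = x - lam • w + r)
    (haerr : ‖r‖ ^ 2 + 2 * lam * εy ≤ σ * (‖y - x‖ ^ 2 + ‖lam • (a + w)‖ ^ 2))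
    (τ : ℝ) (hτ : τ = min lam (1 / lam)) :
    (⟪z - x, b - w⟫ + ⟪z - y, a + w⟫ - εy
      ≥ (1 - 2 * σ) / 2 * τ * (‖a + b‖ ^ 2 + ‖x - y‖ ^ 2)) ∧
    (0 ≤ (1 - 2 * σ) / 2 * τ * (‖a + b‖ ^ 2 + ‖x - y‖ ^ 2)) :=
  sequential_inexact_separator_bound_general σ lam εy hσ hlam z w x b y a r hbeq haeq haerr τ hτ
end
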